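/- arXiv:1801.07390 — 8 statements merged into one kernel-verified Lean document; each statement's English description precedes it below -/
import Mathlib

section
/- Let (C, M) be an M-category. The partial map category Par(C, M), with restriction of (m, f) given by (m, m), is a join restriction category if and only if: (1) for every family {m_i : A_i → A}_{i∈I} of maps in M, the colimit ⋃_{i∈I} A_i of its matching diagram exists in C; (2) the induced morphism ⋁_{i∈I} m_i : ⋃_{i∈I} A_i → A lies in M; and (3) this colimit is stable under pullback along any morphism f : B → A. -/
open CategoryTheory Limits Opposite

universe w v u

namespace JRC

/-- A restriction structure on a category (Cockett–Lack). -/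
structure RestrictionStructure (X : Type u) [Category.{v} X] where
  rbar : ∀ {A B : X}, (A ⟶ B) → (A ⟶ A)
  r1 : ∀ {A B : X} (f : A ⟶ B), rbar f ≫ f = f
  r2 : ∀ {A B C : X} (f : A ⟶ B) (g : A ⟶ C), rbar f ≫ rbar g = rbar g ≫ rbar f
  r3 : ∀ {A B C : X} (f : A ⟶ B) (g : A ⟶ C), rbar (rbar f ≫ g) = rbar f ≫ rbar g
  r4 : ∀ {A B C : X} (f : A ⟶ B) (h : B ⟶ C), f ≫ rbar h = rbar (f ≫ h) ≫ f

namespace RestrictionStructure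

variable {X : Type u} [Category.{v} X] (R : RestrictionStructure X)

/-- The partial order on hom-sets : `f ≤ g` iff `f = g ∘ f̄`. -/
def rle {A B : X} (f g : A ⟶ B) : Prop := f = R.rbar f ≫ g

/-- Compatibility of parallel maps : `f ⌣ g` iff `f ∘ ḡ = g ∘ f̄`. -/
def compat {A B : X} (f g : A ⟶ B) : Prop := R.rbar g ≫ f = R.rbar f ≫ g

/-- Pairwise compatibility of a set of parallel maps. -/
def setCompat {A B : X} (T : Set (A ⟶ B)) : Prop := ∀ f ∈ T, ∀ g ∈ T, R.compat f g

end RestrictionStructure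

/-- A join restriction structure (Guo): all pairwise-compatible sets of parallel maps
have joins, satisfying (J1) and (J2). -/
structure JoinRestrictionStructure (X : Type u) [Category.{v} X] extends
    RestrictionStructure X where
  jn : ∀ {A B : X}, Set (A ⟶ B) → (A ⟶ B)
  jn_upper : ∀ {A B : X} (T : Set (A ⟶ B)), toRestrictionStructure.setCompat T →
    ∀ f ∈ T, toRestrictionStructure.rle f (jn T)
  jn_least : ∀ {A B : X} (T : Set (A ⟶ B)), toRestrictionStructure.setCompat T →
    ∀ g, (∀ f ∈ T, toRestrictionStructure.rle f g) → toRestrictionStructure.rle (jn T) g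
  j1 : ∀ {A B : X} (T : Set (A ⟶ B)), toRestrictionStructure.setCompat T →
    rbar (jn T) = jn ((fun f => rbar f) '' T)
  j2 : ∀ {A B C : X} (T : Set (A ⟶ B)), toRestrictionStructure.setCompat T →
    ∀ (g : C ⟶ A), g ≫ jn T = jn ((fun f => g ≫ f) '' T)

end JRC
namespace JRC

open CategoryTheory Limits Opposite

/-- A stable system of monics on a category: the `M` of an `M`-category (Cockett–Lack). -/
structure StableSystem (C : Type u) [Category.{v} C] where
  M : ∀ {A B : C}, (A ⟶ B) → Prop
  mono : ∀ {A B : C} (m : A ⟶ B), M m → Mono m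
  iso : ∀ {A B : C} (m : A ⟶ B), IsIso m → M m
  comp : ∀ {A B D : C} (m : A ⟶ B) (n : B ⟶ D), M m → M n → M (m ≫ n)
  pullback : ∀ {A B D : C} (f : A ⟶ B) (m : D ⟶ B), M m →
    ∃ (P : C) (p : P ⟶ A) (q : P ⟶ D), M p ∧ IsPullback p q f m

section Matching

variable {C : Type u} [Category.{v} C]

/-- A choice of pairwise pullbacks for a family of maps `m i : A i ⟶ X`, i.e. the data of
the matching diagram of the family. -/
structure MatchingData {ι : Type w} {A : ι → C} {X : C} (m : ∀ i, A i ⟶ X) where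
  P : ι → ι → C
  p₁ : ∀ i j, P i j ⟶ A i
  p₂ : ∀ i j, P i j ⟶ A j
  isPB : ∀ i j, IsPullback (p₁ i j) (p₂ i j) (m i) (m j)

/-- `(U, a)` is a colimit of the matching diagram of the family `m` (with chosen
pullback data `D`). -/
structure IsMatchingColimit {ι : Type w} {A : ι → C} {X : C} {m : ∀ i, A i ⟶ X}
    (D : MatchingData m) (U : C) (a : ∀ i, A i ⟶ U) : Prop where
  w : ∀ i j, D.p₁ i j ≫ a i = D.p₂ i j ≫ a j
  desc : ∀ {B : C} (b : ∀ i, A i ⟶ B), (∀ i j, D.p₁ i j ≫ b i = D.p₂ i j ≫ b j) →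
    ∃! t : U ⟶ B, ∀ i, a i ≫ t = b i

/-- An `M`-category is *geometric* when: (1) every family of `M`-subobjects admits a colimit
`U = ⋃ᵢ Aᵢ` of its matching diagram; (2) the induced map `μ = ⋁ᵢ mᵢ : U ⟶ X` lies in `M`;
(3) this colimit is stable under pullback along any map `f : B ⟶ X`. -/
def StableSystem.Geometric (S : StableSystem C) : Prop :=
  ∀ {ι : Type (max u v)} {A : ι → C} {X : C} (m : ∀ i, A i ⟶ X), (∀ i, S.M (m i)) →
    ∀ (D : MatchingData m),
      ∃ (U : C) (a : ∀ i, A i ⟶ U) (μ : U ⟶ X),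
        IsMatchingColimit D U a ∧ (∀ i, a i ≫ μ = m i) ∧ S.M μ ∧
        ∀ {B : C} (f : B ⟶ X) {A' : ι → C} (m' : ∀ i, A' i ⟶ B) (q : ∀ i, A' i ⟶ A i),
          (∀ i, IsPullback (m' i) (q i) f (m i)) →
          ∀ {U' : C} (μ' : U' ⟶ B) (r : U' ⟶ U), IsPullback μ' r f μ →
          ∀ (a' : ∀ i, A' i ⟶ U'), (∀ i, a' i ≫ μ' = m' i) → (∀ i, a' i ≫ r = q i ≫ a i) →
          ∀ (D' : MatchingData m'), IsMatchingColimit D' U' a'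

end Matching

end JRC
namespace JRC

open CategoryTheory Limits Opposite

section Par

variable {C : Type u} [Category.{v} C]

/-- A span `(m, f)` representing a partial map `A ⇀ B`: `m : dom ⟶ A` lies in `M` and
`f : dom ⟶ B`. -/
structure PartialHom (S : StableSystem C) (A B : C) : Type max u v where
  dom : C
  m : dom ⟶ A
  hm : S.M m
  f : dom ⟶ B

/-- Two spans represent the same partial map iff they differ by an isomorphism of apexes. -/
def PartialHom.Equiv {S : StableSystem C} {A B : C} (h₁ h₂ : PartialHom S A B) : Prop :=
  ∃ φ : h₁.dom ≅ h₂.dom, φ.hom ≫ h₂.m = h₁.m ∧ φ.hom ≫ h₂.f = h₁.f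

instance parSetoid (S : StableSystem C) (A B : C) : Setoid (PartialHom S A B) where
  r := PartialHom.Equiv
  iseqv := by
    constructor
    · intro h
      exact ⟨Iso.refl _, by simp, by simp⟩
    · rintro h₁ h₂ ⟨φ, hm, hf⟩
      refine ⟨φ.symm, ?_, ?_⟩
      · rw [Iso.symm_hom, Iso.inv_comp_eq, hm]
      · rw [Iso.symm_hom, Iso.inv_comp_eq, hf]
    · rintro a b c ⟨φ, hm, hf⟩ ⟨ψ, hm', hf'⟩
      refine ⟨φ.trans ψ, ?_, ?_⟩
      · rw [Iso.trans_hom, Category.assoc, hm', hm]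
      · rw [Iso.trans_hom, Category.assoc, hf', hf]

/-- The partial map category `Par(C, M)` of an `M`-category. -/
def ParCat (_S : StableSystem C) : Type u := C

/-- The identity span. -/
def idSpan (S : StableSystem C) (A : C) : PartialHom S A A :=
  ⟨A, 𝟙 A, S.iso _ inferInstance, 𝟙 A⟩

variable {S : StableSystem C}

/-- The apex of the chosen pullback used to compose two spans. -/
noncomputable def cpObj {A B D : C} (h₁ : PartialHom S A B) (h₂ : PartialHom S B D) : C :=
  (S.pullback h₁.f h₂.m h₂.hm).choose

/-- First projection of the chosen pullback. -/
noncomputable def cpFst {A B D : C} (h₁ : PartialHom S A B) (h₂ : PartialHom S B D) :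
    cpObj h₁ h₂ ⟶ h₁.dom :=
  (S.pullback h₁.f h₂.m h₂.hm).choose_spec.choose

/-- Second projection of the chosen pullback. -/
noncomputable def cpSnd {A B D : C} (h₁ : PartialHom S A B) (h₂ : PartialHom S B D) :
    cpObj h₁ h₂ ⟶ h₂.dom :=
  (S.pullback h₁.f h₂.m h₂.hm).choose_spec.choose_spec.choose

lemma cpFst_M {A B D : C} (h₁ : PartialHom S A B) (h₂ : PartialHom S B D) :
    S.M (cpFst h₁ h₂) :=
  (S.pullback h₁.f h₂.m h₂.hm).choose_spec.choose_spec.choose_spec.1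

lemma cp_isPullback {A B D : C} (h₁ : PartialHom S A B) (h₂ : PartialHom S B D) :
    IsPullback (cpFst h₁ h₂) (cpSnd h₁ h₂) h₁.f h₂.m :=
  (S.pullback h₁.f h₂.m h₂.hm).choose_spec.choose_spec.choose_spec.2

/-- Composition of spans, via a chosen `M`-pullback. -/
noncomputable def compSpan {A B D : C} (h₁ : PartialHom S A B) (h₂ : PartialHom S B D) :
    PartialHom S A D :=
  ⟨cpObj h₁ h₂, cpFst h₁ h₂ ≫ h₁.m, S.comp _ _ (cpFst_M h₁ h₂) h₁.hm, cpSnd h₁ h₂ ≫ h₂.f⟩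

lemma compSpan_well_defined {A B D : C} (h₁ h₁' : PartialHom S A B) (h₂ h₂' : PartialHom S B D)
    (e₁ : h₁ ≈ h₁') (e₂ : h₂ ≈ h₂') : compSpan h₁ h₂ ≈ compSpan h₁' h₂' := by
  obtain ⟨φ, hφm, hφf⟩ := e₁
  obtain ⟨ψ, hψm, hψf⟩ := e₂
  have PB := cp_isPullback h₁ h₂
  have PB' := cp_isPullback h₁' h₂'
  have w : (cpFst h₁ h₂ ≫ φ.hom) ≫ h₁'.f = (cpSnd h₁ h₂ ≫ ψ.hom) ≫ h₂'.m := by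
    rw [Category.assoc, hφf, Category.assoc, hψm, PB.w]
  have w' : (cpFst h₁' h₂' ≫ φ.inv) ≫ h₁.f = (cpSnd h₁' h₂' ≫ ψ.inv) ≫ h₂.m := by
    rw [Category.assoc, Category.assoc, ← hφf, ← hψm]
    simp only [Iso.inv_hom_id_assoc]
    exact PB'.w
  refine ⟨⟨PB'.lift (cpFst h₁ h₂ ≫ φ.hom) (cpSnd h₁ h₂ ≫ ψ.hom) w,
    PB.lift (cpFst h₁' h₂' ≫ φ.inv) (cpSnd h₁' h₂' ≫ ψ.inv) w', ?_, ?_⟩, ?_, ?_⟩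
  · apply PB.hom_ext
    · dsimp only [compSpan]; simp [PB'.lift_fst, PB.lift_fst]
    · dsimp only [compSpan]; simp [PB'.lift_snd, PB.lift_snd]
  · apply PB'.hom_ext
    · dsimp only [compSpan]; simp [PB'.lift_fst, PB.lift_fst]
    · dsimp only [compSpan]; simp [PB'.lift_snd, PB.lift_snd]
  · show _ ≫ cpFst h₁' h₂' ≫ h₁'.m = cpFst h₁ h₂ ≫ h₁.m
    erw [← Category.assoc, PB'.lift_fst, Category.assoc, hφm]
  · show _ ≫ cpSnd h₁' h₂' ≫ h₂'.f = cpSnd h₁ h₂ ≫ h₂.f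
    erw [← Category.assoc, PB'.lift_snd, Category.assoc, hψf]

lemma id_compSpan {A B : C} (h : PartialHom S A B) : compSpan (idSpan S A) h ≈ h := by
  have PB := cp_isPullback (idSpan S A) h
  have PBref : IsPullback h.m (𝟙 h.dom) (𝟙 A) h.m :=
    IsPullback.of_vert_isIso ⟨by simp⟩
  refine ⟨PB.isoIsPullback _ _ PBref, ?_, ?_⟩
  · show (PB.isoIsPullback _ _ PBref).hom ≫ h.m = cpFst (idSpan S A) h ≫ 𝟙 A
    erw [PB.isoIsPullback_hom_fst]
    exact (Category.comp_id _).symm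
  · show (PB.isoIsPullback _ _ PBref).hom ≫ h.f = cpSnd (idSpan S A) h ≫ h.f
    have h2 := PB.isoIsPullback_hom_snd _ _ PBref
    rw [Category.comp_id] at h2
    rw [h2]

lemma compSpan_id {A B : C} (h : PartialHom S A B) : compSpan h (idSpan S B) ≈ h := by
  have PB := cp_isPullback h (idSpan S B)
  have PBref : IsPullback (𝟙 h.dom) h.f h.f (𝟙 B) :=
    IsPullback.of_horiz_isIso ⟨by simp⟩
  refine ⟨PB.isoIsPullback _ _ PBref, ?_, ?_⟩
  · show (PB.isoIsPullback _ _ PBref).hom ≫ h.m = cpFst h (idSpan S B) ≫ h.m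
    have h1 := PB.isoIsPullback_hom_fst _ _ PBref
    rw [Category.comp_id] at h1
    rw [h1]
  · show (PB.isoIsPullback _ _ PBref).hom ≫ h.f = cpSnd h (idSpan S B) ≫ 𝟙 B
    erw [PB.isoIsPullback_hom_snd]
    exact (Category.comp_id _).symm
end Par
end JRC

namespace JRC
open CategoryTheory Limits Opposite

variable {C : Type u} [Category.{v} C] {S : StableSystem C}

lemma compSpan_assoc {A B D E : C} (h₁ : PartialHom S A B) (h₂ : PartialHom S B D)
    (h₃ : PartialHom S D E) :
    compSpan (compSpan h₁ h₂) h₃ ≈ compSpan h₁ (compSpan h₂ h₃) := by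
  have PB₁ := cp_isPullback h₁ h₂
  have PB₂ := cp_isPullback h₂ h₃
  have PB_L : IsPullback (cpFst (compSpan h₁ h₂) h₃) (cpSnd (compSpan h₁ h₂) h₃)
      (cpSnd h₁ h₂ ≫ h₂.f) h₃.m := cp_isPullback (compSpan h₁ h₂) h₃
  have PB_R : IsPullback (cpFst h₁ (compSpan h₂ h₃)) (cpSnd h₁ (compSpan h₂ h₃))
      h₁.f (cpFst h₂ h₃ ≫ h₂.m) := cp_isPullback h₁ (compSpan h₂ h₃)
  have w_e : (cpFst (compSpan h₁ h₂) h₃ ≫ cpSnd h₁ h₂) ≫ h₂.f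
      = cpSnd (compSpan h₁ h₂) h₃ ≫ h₃.m := by
    erw [Category.assoc]; exact PB_L.w
  have hea := PB₂.lift_fst _ _ w_e
  have heb := PB₂.lift_snd _ _ w_e
  have hs : IsPullback (cpFst (compSpan h₁ h₂) h₃)
      (PB₂.lift (cpFst (compSpan h₁ h₂) h₃ ≫ cpSnd h₁ h₂) (cpSnd (compSpan h₁ h₂) h₃) w_e
        ≫ cpSnd h₂ h₃)
      (cpSnd h₁ h₂ ≫ h₂.f) h₃.m := by rw [heb]; exact PB_L
  have T' := (hs.of_bot hea.symm PB₂).flip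
  have R := (T'.paste_vert PB₁.flip).flip
  refine ⟨R.isoIsPullback _ _ PB_R, ?_, ?_⟩
  · show _ ≫ cpFst h₁ (compSpan h₂ h₃) ≫ h₁.m
      = cpFst (compSpan h₁ h₂) h₃ ≫ cpFst h₁ h₂ ≫ h₁.m
    erw [← Category.assoc, R.isoIsPullback_hom_fst, Category.assoc]
  · show _ ≫ cpSnd h₁ (compSpan h₂ h₃) ≫ cpSnd h₂ h₃ ≫ h₃.f
      = cpSnd (compSpan h₁ h₂) h₃ ≫ h₃.f
    erw [← Category.assoc, R.isoIsPullback_hom_snd, ← Category.assoc, heb]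

/-- The partial map category `Par(C, M)` of an `M`-category: morphisms are spans `(m, f)`
with `m ∈ M`, up to isomorphism of apexes, composed by chosen `M`-pullbacks. -/
noncomputable instance ParCat.category (S : StableSystem C) :
    Category.{max u v} (ParCat S) where
  Hom A B := Quotient (parSetoid S A B)
  id A := Quotient.mk _ (idSpan S A)
  comp {A B D} f g := Quotient.map₂ compSpan
    (fun _ _ h _ _ h' => compSpan_well_defined _ _ _ _ h h') f g
  id_comp {A B} f := by
    induction f using Quotient.ind with
    | _ h => exact Quotient.sound (id_compSpan h)
  comp_id {A B} f := by
    induction f using Quotient.ind with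
    | _ h => exact Quotient.sound (compSpan_id h)
  assoc {A B D E} f g k := by
    induction f using Quotient.ind with
    | _ h₁ =>
      induction g using Quotient.ind with
      | _ h₂ =>
        induction k using Quotient.ind with
        | _ h₃ => exact Quotient.sound (compSpan_assoc h₁ h₂ h₃)

/-- The partial map represented by a span. -/
def ParCat.homMk {S : StableSystem C} {A B : ParCat S} (h : PartialHom S A B) : A ⟶ B :=
  Quotient.mk _ h

end JRC

namespace JRC
open CategoryTheory Limits

variable {C : Type u} [Category.{v} C] {S : StableSystem C}

/-- A commuting triangle over a mono is a pullback square. -/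
lemma isPullback_id_left {D E A : C} (k : D ⟶ E) (m : D ⟶ A) (n : E ⟶ A) (hn : Mono n)
    (w : k ≫ n = m) : IsPullback (𝟙 D) k m n := by
  refine IsPullback.of_isLimit (PullbackCone.IsLimit.mk (by simpa using w.symm)
    (fun s => s.fst) (fun s => by simp) (fun s => ?_) (fun s t h1 _ => by simpa using h1)
    )
  have : s.fst ≫ k ≫ n = s.snd ≫ n := by
    calc s.fst ≫ k ≫ n = s.fst ≫ m := by rw [w]
    _ = s.snd ≫ n := s.condition
  rw [← cancel_mono n]
  simpa using this

lemma mono_fst_of_isPullback {P A B X : C} {p₁ : P ⟶ A} {p₂ : P ⟶ B} {f : A ⟶ X} {m : B ⟶ X}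
    (pb : IsPullback p₁ p₂ f m) (hm : Mono m) : Mono p₁ := by
  constructor
  intro Z x y h
  apply pb.hom_ext h
  rw [← cancel_mono m, Category.assoc, Category.assoc, ← pb.w, ← Category.assoc, h,
    Category.assoc]

lemma M_of_isPullback {P A B X : C} {p₁ : P ⟶ A} {p₂ : P ⟶ B} {f : A ⟶ X} {m : B ⟶ X}
    (pb : IsPullback p₁ p₂ f m) (hm : S.M m) : S.M p₁ := by
  obtain ⟨Q, q₁, q₂, hq, pbq⟩ := S.pullback f m hm
  have := pb.isoIsPullback_hom_fst _ _ pbq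
  rw [← this]
  exact S.comp _ _ (S.iso _ inferInstance) hq

lemma homMk_eq_iff {A B : C} (h h' : PartialHom S A B) :
    ParCat.homMk (S := S) (A := A) (B := B) h = ParCat.homMk (S := S) h' ↔ h ≈ h' := by
  constructor
  · exact Quotient.exact
  · exact Quotient.sound

lemma homMk_comp {A B D : ParCat S} (h₁ : PartialHom S A B) (h₂ : PartialHom S B D) :
    ParCat.homMk (S := S) h₁ ≫ ParCat.homMk (S := S) h₂ =
      ParCat.homMk (S := S) (compSpan h₁ h₂) := rfl

/-- Composition of partial maps computed with an arbitrary `M`-pullback. -/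
lemma comp_eq_of_isPullback {A B D : ParCat S} (h₁ : PartialHom S A B) (h₂ : PartialHom S B D)
    {P : C} {p₁ : P ⟶ h₁.dom} {p₂ : P ⟶ h₂.dom} (pb : IsPullback p₁ p₂ h₁.f h₂.m)
    (hM : S.M (p₁ ≫ h₁.m)) :
    ParCat.homMk (S := S) h₁ ≫ ParCat.homMk (S := S) h₂ =
      ParCat.homMk (S := S) ⟨P, p₁ ≫ h₁.m, hM, p₂ ≫ h₂.f⟩ := by
  rw [homMk_comp]
  apply Quotient.sound
  refine ⟨(pb.isoIsPullback _ _ (cp_isPullback h₁ h₂)).symm, ?_, ?_⟩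
  · show _ ≫ p₁ ≫ h₁.m = cpFst h₁ h₂ ≫ h₁.m
    erw [← Category.assoc]
    congr 1
    rw [Iso.symm_hom, Iso.inv_comp_eq]
    exact (pb.isoIsPullback_hom_fst _ _ (cp_isPullback h₁ h₂)).symm
  · show _ ≫ p₂ ≫ h₂.f = cpSnd h₁ h₂ ≫ h₂.f
    erw [← Category.assoc]
    congr 1
    rw [Iso.symm_hom, Iso.inv_comp_eq]
    exact (pb.isoIsPullback_hom_snd _ _ (cp_isPullback h₁ h₂)).symm

end JRC
namespace JRC
open CategoryTheory Limits

variable {C : Type u} [Category.{v} C] {S : StableSystem C}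

lemma id_comp_P {X : C} {Y : ParCat S} (f : X ⟶ (Y : C)) : 𝟙 X ≫ f = f :=
  Category.id_comp f

/-- The restriction span `(m, m)` of a span `(m, f)`. -/
def rbarSpan {A B : C} (h : PartialHom S A B) : PartialHom S A A :=
  ⟨h.dom, h.m, h.hm, h.m⟩

/-- The restriction operator on `Par(C, M)`. -/
def rbarQ {A B : ParCat S} (q : A ⟶ B) : A ⟶ A :=
  @Quotient.map (PartialHom S A B) (PartialHom S A A) (parSetoid S A B) (parSetoid S A A)
    rbarSpan (fun _ _ e => Exists.elim e fun φ hp => ⟨φ, hp.1, hp.1⟩) q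

lemma rbarQ_homMk {A B : ParCat S} (h : PartialHom S A B) :
    rbarQ (ParCat.homMk (S := S) h) = ParCat.homMk (S := S) (rbarSpan h) := rfl

lemma r1Q {A B : ParCat S} (h : PartialHom S A B) :
    rbarQ (ParCat.homMk (S := S) h) ≫ ParCat.homMk (S := S) h = ParCat.homMk (S := S) h := by
  haveI := S.mono _ h.hm
  have pb : IsPullback (𝟙 h.dom) (𝟙 h.dom) ((rbarSpan h).f) h.m :=
    isPullback_id_left _ _ _ this (by simp [rbarSpan, id_comp_P])
  rw [rbarQ_homMk, comp_eq_of_isPullback (rbarSpan h) h pb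
    (by simpa [rbarSpan, id_comp_P] using h.hm)]
  exact Quotient.sound ⟨Iso.refl _, by simp [rbarSpan], by simp [rbarSpan]⟩

lemma r2Q {A B C' : ParCat S} (f : PartialHom S A B) (g : PartialHom S A C') :
    rbarQ (ParCat.homMk (S := S) f) ≫ rbarQ (ParCat.homMk (S := S) g) =
      rbarQ (ParCat.homMk (S := S) g) ≫ rbarQ (ParCat.homMk (S := S) f) := by
  obtain ⟨P, c₁, c₂, hc, pb⟩ := S.pullback f.m g.m g.hm
  have hM1 : S.M (c₁ ≫ f.m) := S.comp _ _ hc f.hm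
  have hM2 : S.M (c₂ ≫ g.m) := S.comp _ _ (M_of_isPullback pb.flip f.hm) g.hm
  rw [rbarQ_homMk, rbarQ_homMk,
    comp_eq_of_isPullback (rbarSpan f) (rbarSpan g) pb hM1,
    comp_eq_of_isPullback (rbarSpan g) (rbarSpan f) pb.flip hM2]
  exact Quotient.sound ⟨Iso.refl _, by simpa [rbarSpan, id_comp_P] using pb.w.symm,
    by simpa [rbarSpan, id_comp_P] using pb.w⟩

lemma r3Q {A B C' : ParCat S} (f : PartialHom S A B) (g : PartialHom S A C') :
    rbarQ (rbarQ (ParCat.homMk (S := S) f) ≫ ParCat.homMk (S := S) g) =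
      rbarQ (ParCat.homMk (S := S) f) ≫ rbarQ (ParCat.homMk (S := S) g) := by
  obtain ⟨P, c₁, c₂, hc, pb⟩ := S.pullback f.m g.m g.hm
  have hM1 : S.M (c₁ ≫ f.m) := S.comp _ _ hc f.hm
  rw [rbarQ_homMk, rbarQ_homMk, comp_eq_of_isPullback (rbarSpan f) g pb hM1,
    comp_eq_of_isPullback (rbarSpan f) (rbarSpan g) pb hM1, rbarQ_homMk]
  exact Quotient.sound ⟨Iso.refl _, by simp [rbarSpan, id_comp_P],
    by simpa [rbarSpan, id_comp_P] using pb.w.symm⟩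

lemma r4Q {A B C' : ParCat S} (f : PartialHom S A B) (h : PartialHom S B C') :
    ParCat.homMk (S := S) f ≫ rbarQ (ParCat.homMk (S := S) h) =
      rbarQ (ParCat.homMk (S := S) f ≫ ParCat.homMk (S := S) h) ≫
        ParCat.homMk (S := S) f := by
  haveI := S.mono _ f.hm
  obtain ⟨Q, c₁, c₂, hc, pb⟩ := S.pullback f.f h.m h.hm
  have hM1 : S.M (c₁ ≫ f.m) := S.comp _ _ hc f.hm
  have pb2 : IsPullback (𝟙 Q) c₁
      ((⟨Q, c₁ ≫ f.m, hM1, c₁ ≫ f.m⟩ : PartialHom S A A).f) f.m :=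
    isPullback_id_left _ _ _ this rfl
  rw [rbarQ_homMk, comp_eq_of_isPullback f (rbarSpan h) pb hM1,
    comp_eq_of_isPullback f h pb hM1, rbarQ_homMk,
    comp_eq_of_isPullback (rbarSpan (⟨Q, c₁ ≫ f.m, hM1, c₂ ≫ h.f⟩ : PartialHom S A C'))
      f pb2 (by simpa [rbarSpan, id_comp_P] using hM1)]
  refine Quotient.sound ⟨Iso.refl _, by simp [rbarSpan, id_comp_P], ?_⟩
  show 𝟙 Q ≫ c₁ ≫ f.f = c₂ ≫ (rbarSpan h).f
  simpa [rbarSpan, id_comp_P] using pb.w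

/-- The restriction structure on `Par(C, M)` given by `(m, f) ↦ (m, m)`. -/
noncomputable def Rst (S : StableSystem C) : RestrictionStructure (ParCat S) where
  rbar := rbarQ
  r1 := by
    intro A B f
    induction f using Quotient.ind with
    | _ h => exact r1Q h
  r2 := by
    intro A B C' f g
    induction f using Quotient.ind with
    | _ hf =>
      induction g using Quotient.ind with
      | _ hg => exact r2Q hf hg
  r3 := by
    intro A B C' f g
    induction f using Quotient.ind with
    | _ hf =>
      induction g using Quotient.ind with
      | _ hg => exact r3Q hf hg
  r4 := by
    intro A B C' f h
    induction f using Quotient.ind with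
    | _ hf =>
      induction h using Quotient.ind with
      | _ hh => exact r4Q hf hh

lemma Rst_rbar_homMk {A B : ParCat S} (h : PartialHom S A B) :
    (Rst S).rbar (ParCat.homMk (S := S) h) = ParCat.homMk (S := S) (rbarSpan h) := rfl

end JRC
namespace JRC
open CategoryTheory Limits

section Abstract

variable {X : Type*} [Category X] (R : RestrictionStructure X)

lemma RestrictionStructure.rle_refl {A B : X} (f : A ⟶ B) : R.rle f f := (R.r1 f).symm

lemma RestrictionStructure.rle_precomp {A B C' : X} {f j : A ⟶ B} (g : C' ⟶ A)
    (h : R.rle f j) : R.rle (g ≫ f) (g ≫ j) := by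
  unfold rle at h ⊢
  calc g ≫ f = g ≫ R.rbar f ≫ j := by rw [← h]
  _ = (g ≫ R.rbar f) ≫ j := (Category.assoc _ _ _).symm
  _ = (R.rbar (g ≫ f) ≫ g) ≫ j := by rw [R.r4]
  _ = R.rbar (g ≫ f) ≫ g ≫ j := Category.assoc _ _ _

lemma RestrictionStructure.compat_precomp {A B C' : X} {f g : A ⟶ B} (h : C' ⟶ A)
    (hc : R.compat f g) : R.compat (h ≫ f) (h ≫ g) := by
  unfold compat at hc ⊢
  calc R.rbar (h ≫ g) ≫ h ≫ f = (R.rbar (h ≫ g) ≫ h) ≫ f := (Category.assoc _ _ _).symm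
  _ = (h ≫ R.rbar g) ≫ f := by rw [← R.r4]
  _ = h ≫ R.rbar g ≫ f := Category.assoc _ _ _
  _ = h ≫ R.rbar f ≫ g := by rw [hc]
  _ = (h ≫ R.rbar f) ≫ g := (Category.assoc _ _ _).symm
  _ = (R.rbar (h ≫ f) ≫ h) ≫ g := by rw [R.r4]
  _ = R.rbar (h ≫ f) ≫ h ≫ g := Category.assoc _ _ _

/-- Least upper bound for the restriction order. -/
def RestrictionStructure.IsLub {A B : X} (T : Set (A ⟶ B)) (j : A ⟶ B) : Prop :=
  (∀ f ∈ T, R.rle f j) ∧ ∀ g, (∀ f ∈ T, R.rle f g) → R.rle j g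

end Abstract

variable {C : Type u} [Category.{v} C] {S : StableSystem C}

lemma homMk_out {A B : ParCat S} (q : A ⟶ B) :
    ParCat.homMk (S := S) (Quotient.out q) = q := Quotient.out_eq q

lemma rle_iff {A B : ParCat S} (h g : PartialHom S A B) :
    (Rst S).rle (ParCat.homMk (S := S) h) (ParCat.homMk (S := S) g) ↔
      ∃ k : h.dom ⟶ g.dom, k ≫ g.m = h.m ∧ k ≫ g.f = h.f := by
  haveI := S.mono _ g.hm
  obtain ⟨P, c₁, c₂, hc, pb⟩ := S.pullback h.m g.m g.hm
  have hM1 : S.M (c₁ ≫ h.m) := S.comp _ _ hc h.hm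
  unfold RestrictionStructure.rle
  rw [Rst_rbar_homMk, comp_eq_of_isPullback (rbarSpan h) g pb hM1]
  constructor
  · intro e
    obtain ⟨φ, e1, e2⟩ := Quotient.exact e
    refine ⟨φ.hom ≫ c₂, ?_, ?_⟩
    · erw [Category.assoc, ← pb.w]
      exact e1
    · erw [Category.assoc]
      exact e2
  · rintro ⟨k, k1, k2⟩
    have pb' : IsPullback (𝟙 h.dom) k h.m g.m := isPullback_id_left k h.m g.m this k1
    refine Quotient.sound ⟨pb'.isoIsPullback _ _ pb, ?_, ?_⟩
    · show _ ≫ c₁ ≫ (rbarSpan h).m = h.m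
      erw [← Category.assoc, pb'.isoIsPullback_hom_fst]
      simp [rbarSpan, id_comp_P]
    · show _ ≫ c₂ ≫ g.f = h.f
      erw [← Category.assoc, pb'.isoIsPullback_hom_snd, k2]

lemma compat_iff {A B : ParCat S} (h g : PartialHom S A B) {P : C} {p₁ : P ⟶ h.dom}
    {p₂ : P ⟶ g.dom} (pb : IsPullback p₁ p₂ h.m g.m) :
    (Rst S).compat (ParCat.homMk (S := S) h) (ParCat.homMk (S := S) g) ↔
      p₁ ≫ h.f = p₂ ≫ g.f := by
  haveI hmh := S.mono _ h.hm
  haveI hmg := S.mono _ g.hm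
  have hM2 : S.M (p₂ ≫ g.m) := S.comp _ _ (M_of_isPullback pb.flip h.hm) g.hm
  have hM1 : S.M (p₁ ≫ h.m) := S.comp _ _ (M_of_isPullback pb g.hm) h.hm
  unfold RestrictionStructure.compat
  rw [Rst_rbar_homMk, Rst_rbar_homMk,
    comp_eq_of_isPullback (rbarSpan g) h pb.flip hM2,
    comp_eq_of_isPullback (rbarSpan h) g pb hM1]
  constructor
  · intro e
    obtain ⟨φ, e1, e2⟩ := Quotient.exact e
    have h1 : φ.hom ≫ p₁ = p₁ := by
      erw [← cancel_mono h.m, Category.assoc]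
      calc φ.hom ≫ p₁ ≫ h.m = p₂ ≫ (rbarSpan g).m := e1
      _ = p₁ ≫ h.m := pb.w.symm
    have h2 : φ.hom ≫ p₂ = p₂ := by
      erw [← cancel_mono g.m, Category.assoc]
      exact (congrArg (φ.hom ≫ ·) pb.w).symm.trans ((Category.assoc _ _ _).symm.trans
        ((congrArg (· ≫ h.m) h1).trans pb.w))
    have hφ : φ.hom = 𝟙 P := by
      apply pb.hom_ext
      · rw [h1, Category.id_comp]
      · rw [h2, Category.id_comp]
    have := e2
    erw [hφ, Category.id_comp] at this
    exact this.symm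
  · intro e
    refine Quotient.sound ⟨Iso.refl _, ?_, ?_⟩
    · show 𝟙 P ≫ p₁ ≫ (rbarSpan h).m = p₂ ≫ (rbarSpan g).m
      erw [Category.id_comp]
      exact pb.w
    · show 𝟙 P ≫ p₂ ≫ g.f = p₁ ≫ h.f
      erw [Category.id_comp]
      exact e.symm

lemma rle_antisymm {A B : ParCat S} {f g : A ⟶ B} (h1 : (Rst S).rle f g)
    (h2 : (Rst S).rle g f) : f = g := by
  rw [← homMk_out f, ← homMk_out g] at h1 h2 ⊢
  rw [rle_iff] at h1 h2
  obtain ⟨k, k1, k2⟩ := h1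
  obtain ⟨l, l1, l2⟩ := h2
  haveI := S.mono _ (Quotient.out f).hm
  haveI := S.mono _ (Quotient.out g).hm
  have kl : k ≫ l = 𝟙 _ := by
    erw [← cancel_mono (Quotient.out f).m, Category.assoc, l1, k1, Category.id_comp]
  have lk : l ≫ k = 𝟙 _ := by
    erw [← cancel_mono (Quotient.out g).m, Category.assoc, k1, l1, Category.id_comp]
  exact Quotient.sound ⟨⟨k, l, kl, lk⟩, k1, k2⟩

lemma isLub_unique {A B : ParCat S} {T : Set (A ⟶ B)} {j j' : A ⟶ B}
    (h : (Rst S).IsLub T j) (h' : (Rst S).IsLub T j') : j = j' :=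
  rle_antisymm (h.2 j' h'.1) (h'.2 j h.1)

end JRC
namespace JRC
open CategoryTheory Limits

variable {C : Type u} [Category.{v} C] {S : StableSystem C}

lemma setCompat_empty {A₀ B₀ : ParCat S} : (Rst S).setCompat (∅ : Set (A₀ ⟶ B₀)) := by
  intro f hf
  exact absurd hf (Set.notMem_empty f)

/-- The main construction: if `(C, M)` is geometric then every compatible set of partial
maps has a least upper bound, and these are preserved by restriction and precomposition. -/
lemma exists_join (hG : S.Geometric) {A₀ B₀ : ParCat S} (T : Set (A₀ ⟶ B₀))
    (hc : (Rst S).setCompat T) :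
    ∃ j : A₀ ⟶ B₀, (Rst S).IsLub T j ∧
      (Rst S).IsLub ((fun f => (Rst S).rbar f) '' T) ((Rst S).rbar j) ∧
      ∀ {C' : ParCat S} (g : C' ⟶ A₀), (Rst S).IsLub ((fun f => g ≫ f) '' T) (g ≫ j) := by
  classical
  set Rp : T → PartialHom S A₀ B₀ := fun i => Quotient.out i.1 with hRp
  have hout : ∀ i : T, ParCat.homMk (S := S) (Rp i) = i.1 := fun i => homMk_out i.1
  have pbex : ∀ i j : T, ∃ (P : C) (p₁ : P ⟶ (Rp i).dom) (p₂ : P ⟶ (Rp j).dom),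
      S.M p₁ ∧ IsPullback p₁ p₂ (Rp i).m (Rp j).m :=
    fun i j => S.pullback (Rp i).m (Rp j).m (Rp j).hm
  choose P p₁ p₂ hMp pb using pbex
  obtain ⟨U, a, μ, colim, ha, hMμ, stab⟩ :=
    hG (fun i : T => (Rp i).m) (fun i => (Rp i).hm) ⟨P, p₁, p₂, pb⟩
  have hfw : ∀ i j : T, p₁ i j ≫ (Rp i).f = p₂ i j ≫ (Rp j).f := by
    intro i j
    have hcij := hc i.1 i.2 j.1 j.2
    rw [← hout i, ← hout j] at hcij
    exact (compat_iff (Rp i) (Rp j) (pb i j)).mp hcij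
  obtain ⟨fU, hfU, -⟩ := colim.desc (fun i => (Rp i).f) hfw
  have uniq : ∀ {E : C} (b : ∀ i : T, (Rp i).dom ⟶ E),
      (∀ i j, p₁ i j ≫ b i = p₂ i j ≫ b j) → ∀ (t t' : U ⟶ E),
      (∀ i, a i ≫ t = b i) → (∀ i, a i ≫ t' = b i) → t = t' := by
    intro E b hb t t' h h'
    obtain ⟨t₀, -, hu⟩ := colim.desc b hb
    rw [hu t h, hu t' h']
  set js : PartialHom S A₀ B₀ := ⟨U, μ, hMμ, fU⟩ with hjs
  have hup : ∀ f ∈ T, (Rst S).rle f (ParCat.homMk (S := S) js) := by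
    intro f hf
    have h0 : ParCat.homMk (S := S) (Rp ⟨f, hf⟩) = f := hout ⟨f, hf⟩
    rw [← h0, rle_iff]
    exact ⟨a ⟨f, hf⟩, ha _, hfU _⟩
  have hleast : ∀ g, (∀ f ∈ T, (Rst S).rle f g) →
      (Rst S).rle (ParCat.homMk (S := S) js) g := by
    intro g hg
    rw [← homMk_out g] at hg ⊢
    rw [rle_iff]
    haveI := S.mono _ (Quotient.out g).hm
    have hk : ∀ i : T, ∃ k : (Rp i).dom ⟶ (Quotient.out g).dom,
        k ≫ (Quotient.out g).m = (Rp i).m ∧ k ≫ (Quotient.out g).f = (Rp i).f := by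
      intro i
      have h' := hg i.1 i.2
      rw [← hout i] at h'
      exact (rle_iff _ _).mp h'
    choose k hk1 hk2 using hk
    have hkw : ∀ i j, p₁ i j ≫ k i = p₂ i j ≫ k j := by
      intro i j
      erw [← cancel_mono (Quotient.out g).m, Category.assoc, Category.assoc, hk1, hk1]
      exact (pb i j).w
    obtain ⟨t, htk, -⟩ := colim.desc k hkw
    refine ⟨t, ?_, ?_⟩
    · refine uniq (fun i => (Rp i).m) (fun i j => (pb i j).w) _ _ (fun i => ?_) ha
      erw [← Category.assoc, htk i, hk1]
    · refine uniq (fun i => (Rp i).f) hfw _ _ (fun i => ?_) hfU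
      erw [← Category.assoc, htk i, hk2]
  refine ⟨ParCat.homMk (S := S) js, ⟨hup, hleast⟩, ⟨?_, ?_⟩, ?_⟩
  · -- rbar is an upper bound of the restrictions
    rintro f' ⟨f, hf, rfl⟩
    show (Rst S).rle ((Rst S).rbar f) ((Rst S).rbar (ParCat.homMk (S := S) js))
    have h0 : ParCat.homMk (S := S) (Rp ⟨f, hf⟩) = f := hout ⟨f, hf⟩
    rw [← h0, Rst_rbar_homMk, Rst_rbar_homMk, rle_iff]
    exact ⟨a ⟨f, hf⟩, ha _, ha _⟩
  · -- rbar is least among upper bounds of the restrictions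
    intro g hg
    rw [← homMk_out g] at hg ⊢
    rw [Rst_rbar_homMk, rle_iff]
    haveI := S.mono _ (Quotient.out g).hm
    have hk : ∀ i : T, ∃ k : (Rp i).dom ⟶ (Quotient.out g).dom,
        k ≫ (Quotient.out g).m = (Rp i).m ∧ k ≫ (Quotient.out g).f = (Rp i).m := by
      intro i
      have h' := hg ((Rst S).rbar i.1) ⟨i.1, i.2, rfl⟩
      rw [← hout i, Rst_rbar_homMk, rle_iff] at h'
      exact h'
    choose k hk1 hk2 using hk
    have hkw : ∀ i j, p₁ i j ≫ k i = p₂ i j ≫ k j := by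
      intro i j
      erw [← cancel_mono (Quotient.out g).m, Category.assoc, Category.assoc, hk1, hk1]
      exact (pb i j).w
    obtain ⟨t, htk, -⟩ := colim.desc k hkw
    refine ⟨t, ?_, ?_⟩
    · refine uniq (fun i => (Rp i).m) (fun i j => (pb i j).w) _ _ (fun i => ?_) ha
      erw [← Category.assoc, htk i, hk1]
    · refine uniq (fun i => (Rp i).m) (fun i j => (pb i j).w) _ _ (fun i => ?_) ha
      erw [← Category.assoc, htk i, hk2]
  · -- precomposition preserves the join
    intro C' g
    obtain ⟨Q, ν, ρ, hMν, pbQ⟩ := S.pullback (Quotient.out g).f μ hMμ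
    have pbexi : ∀ i : T, ∃ (Qi : C) (νi : Qi ⟶ (Quotient.out g).dom)
        (ρi : Qi ⟶ (Rp i).dom), S.M νi ∧ IsPullback νi ρi (Quotient.out g).f (Rp i).m :=
      fun i => S.pullback (Quotient.out g).f (Rp i).m (Rp i).hm
    choose Qi νi ρi hMνi pbQi using pbexi
    have hgj : g ≫ ParCat.homMk (S := S) js = ParCat.homMk (S := S)
        ⟨Q, ν ≫ (Quotient.out g).m, S.comp _ _ hMν (Quotient.out g).hm, ρ ≫ fU⟩ := by
      conv_lhs => rw [← homMk_out g]
      exact comp_eq_of_isPullback (Quotient.out g) js pbQ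
        (S.comp _ _ hMν (Quotient.out g).hm)
    have hgi : ∀ i : T, g ≫ i.1 = ParCat.homMk (S := S)
        ⟨Qi i, νi i ≫ (Quotient.out g).m, S.comp _ _ (hMνi i) (Quotient.out g).hm,
          ρi i ≫ (Rp i).f⟩ := by
      intro i
      conv_lhs => rw [← homMk_out g, ← hout i]
      exact comp_eq_of_isPullback (Quotient.out g) (Rp i) (pbQi i)
        (S.comp _ _ (hMνi i) (Quotient.out g).hm)
    have ha'ex : ∀ i : T, ∃ a'i : Qi i ⟶ Q, a'i ≫ ν = νi i ∧ a'i ≫ ρ = ρi i ≫ a i := by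
      intro i
      have w : νi i ≫ (Quotient.out g).f = (ρi i ≫ a i) ≫ μ := by
        erw [Category.assoc, ha i]
        exact (pbQi i).w
      exact ⟨pbQ.lift (νi i) (ρi i ≫ a i) w, pbQ.lift_fst _ _ _, pbQ.lift_snd _ _ _⟩
    choose a' ha'1 ha'2 using ha'ex
    have pbex' : ∀ i j : T, ∃ (P' : C) (q₁ : P' ⟶ Qi i) (q₂ : P' ⟶ Qi j),
        S.M q₁ ∧ IsPullback q₁ q₂ (νi i) (νi j) :=
      fun i j => S.pullback (νi i) (νi j) (hMνi j)
    choose P' q₁ q₂ hMq pb' using pbex'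
    have colim' : IsMatchingColimit (⟨P', q₁, q₂, pb'⟩ : MatchingData fun i : T => νi i)
        Q a' :=
      stab (Quotient.out g).f (fun i => νi i) (fun i => ρi i) pbQi ν ρ pbQ a' ha'1 ha'2 _
    have uniq' : ∀ {E : C} (b : ∀ i : T, Qi i ⟶ E),
        (∀ i j, q₁ i j ≫ b i = q₂ i j ≫ b j) → ∀ (t t' : Q ⟶ E),
        (∀ i, a' i ≫ t = b i) → (∀ i, a' i ≫ t' = b i) → t = t' := by
      intro E b hb t t' h h'
      obtain ⟨t₀, -, hu⟩ := colim'.desc b hb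
      rw [hu t h, hu t' h']
    constructor
    · rintro f' ⟨f, hf, rfl⟩
      exact (Rst S).rle_precomp g (hup f hf)
    · intro kq hkq
      haveI := S.mono _ (Quotient.out kq).hm
      have ht : ∀ i : T, ∃ t : Qi i ⟶ (Quotient.out kq).dom,
          t ≫ (Quotient.out kq).m = νi i ≫ (Quotient.out g).m ∧
          t ≫ (Quotient.out kq).f = ρi i ≫ (Rp i).f := by
        intro i
        have h' := hkq (g ≫ i.1) ⟨i.1, i.2, rfl⟩
        rw [hgi i, ← homMk_out kq, rle_iff] at h'
        exact h'
      choose t ht1 ht2 using ht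
      have htw : ∀ i j, q₁ i j ≫ t i = q₂ i j ≫ t j := by
        intro i j
        erw [← cancel_mono (Quotient.out kq).m, Category.assoc, Category.assoc, ht1, ht1,
          ← Category.assoc, ← Category.assoc, (pb' i j).w]
      obtain ⟨tt, htt, -⟩ := colim'.desc t htw
      rw [hgj, ← homMk_out kq, rle_iff]
      refine ⟨tt, ?_, ?_⟩
      · refine uniq' (fun i => νi i ≫ (Quotient.out g).m)
          (fun i j => by erw [← Category.assoc, ← Category.assoc, (pb' i j).w]) _ _
          (fun i => ?_) (fun i => ?_)
        · erw [← Category.assoc, htt i, ht1]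
        · erw [← Category.assoc, ha'1]
      · have hbw : ∀ i j, q₁ i j ≫ (ρi i ≫ (Rp i).f) = q₂ i j ≫ (ρi j ≫ (Rp j).f) := by
          intro i j
          have wcone : (q₁ i j ≫ ρi i) ≫ (Rp i).m = (q₂ i j ≫ ρi j) ≫ (Rp j).m := by
            erw [Category.assoc, ← (pbQi i).w, Category.assoc, ← (pbQi j).w,
              ← Category.assoc, ← Category.assoc, (pb' i j).w]
          have hu1 := (pb i j).lift_fst _ _ wcone
          have hu2 := (pb i j).lift_snd _ _ wcone
          calc q₁ i j ≫ ρi i ≫ (Rp i).f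
              = ((pb i j).lift _ _ wcone ≫ p₁ i j) ≫ (Rp i).f := by
                erw [hu1, Category.assoc]
          _ = (pb i j).lift _ _ wcone ≫ p₂ i j ≫ (Rp j).f := by
                erw [Category.assoc, hfw i j]
          _ = q₂ i j ≫ ρi j ≫ (Rp j).f := by erw [← Category.assoc, hu2, Category.assoc]
        refine uniq' (fun i => ρi i ≫ (Rp i).f) hbw _ _ (fun i => ?_) (fun i => ?_)
        · erw [← Category.assoc, htt i, ht2]
        · show a' i ≫ ρ ≫ fU = ρi i ≫ (Rp i).f
          erw [← Category.assoc, ha'2, Category.assoc, hfU]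

end JRC
namespace JRC
open CategoryTheory Limits

variable {C : Type u} [Category.{v} C] {S : StableSystem C}

lemma rbar_idem {A₀ B₀ : ParCat S} (q : A₀ ⟶ B₀) :
    (Rst S).rbar ((Rst S).rbar q) = (Rst S).rbar q := by
  induction q using Quotient.ind with
  | _ h => rfl

lemma compat_rbar {A₀ B₀ : ParCat S} (f g : A₀ ⟶ B₀) :
    (Rst S).compat ((Rst S).rbar f) ((Rst S).rbar g) := by
  unfold RestrictionStructure.compat
  rw [rbar_idem, rbar_idem]
  exact ((Rst S).r2 g f)

lemma setCompat_rbar_image {A₀ B₀ : ParCat S} (T : Set (A₀ ⟶ B₀)) :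
    (Rst S).setCompat ((fun f => (Rst S).rbar f) '' T) := by
  rintro f' ⟨f, _, rfl⟩ g' ⟨g, _, rfl⟩
  exact compat_rbar f g

lemma setCompat_precomp_image {A₀ B₀ C' : ParCat S} (T : Set (A₀ ⟶ B₀))
    (hT : (Rst S).setCompat T) (g : C' ⟶ A₀) :
    (Rst S).setCompat ((fun f => g ≫ f) '' T) := by
  rintro f' ⟨f, hf, rfl⟩ k' ⟨k, hk, rfl⟩
  exact (Rst S).compat_precomp g (hT f hf k hk)

/-- The chosen join of a set of partial maps. -/
noncomputable def jnD (hG : S.Geometric) {A₀ B₀ : ParCat S} (T : Set (A₀ ⟶ B₀)) :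
    A₀ ⟶ B₀ :=
  letI := Classical.dec ((Rst S).setCompat T)
  if h : (Rst S).setCompat T then (exists_join hG T h).choose
  else (exists_join hG (∅ : Set (A₀ ⟶ B₀)) setCompat_empty).choose

lemma jnD_pos (hG : S.Geometric) {A₀ B₀ : ParCat S} (T : Set (A₀ ⟶ B₀))
    (hT : (Rst S).setCompat T) : jnD hG T = (exists_join hG T hT).choose := dif_pos hT

/-- The join restriction structure on `Par(C, M)` of a geometric `M`-category. -/
noncomputable def mkJoin (hG : S.Geometric) : JoinRestrictionStructure (ParCat S) where
  toRestrictionStructure := Rst S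
  jn {A₀ B₀} T := jnD hG T
  jn_upper {A₀ B₀} T hT f hf := by
    show (Rst S).rle f (jnD hG T)
    rw [jnD_pos hG T hT]
    exact (exists_join hG T hT).choose_spec.1.1 f hf
  jn_least {A₀ B₀} T hT g hg := by
    show (Rst S).rle (jnD hG T) g
    rw [jnD_pos hG T hT]
    exact (exists_join hG T hT).choose_spec.1.2 g hg
  j1 {A₀ B₀} T hT := by
    show (Rst S).rbar (jnD hG T) = jnD hG ((fun f => (Rst S).rbar f) '' T)
    rw [jnD_pos hG T hT, jnD_pos hG _ (setCompat_rbar_image T)]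
    exact isLub_unique (exists_join hG T hT).choose_spec.2.1
      (exists_join hG _ (setCompat_rbar_image T)).choose_spec.1
  j2 {A₀ B₀ C'} T hT g := by
    show g ≫ jnD hG T = jnD hG ((fun f => g ≫ f) '' T)
    rw [jnD_pos hG T hT, jnD_pos hG _ (setCompat_precomp_image T hT g)]
    exact isLub_unique ((exists_join hG T hT).choose_spec.2.2 g)
      (exists_join hG _ (setCompat_precomp_image T hT g)).choose_spec.1

end JRC
namespace JRC
open CategoryTheory Limits

variable {C : Type u} [Category.{v} C] {S : StableSystem C}

lemma geometric_of_join (JS : JoinRestrictionStructure (ParCat S))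
    (hpin : ∀ (A B : C) (h : PartialHom S A B),
      JS.rbar (ParCat.homMk (S := S) (A := A) (B := B) h) =
        ParCat.homMk (S := S) ⟨h.dom, h.m, h.hm, h.m⟩) : S.Geometric := by
  have hrb : ∀ {A B : ParCat S} (q : A ⟶ B), JS.rbar q = (Rst S).rbar q := by
    intro A B q
    erw [← homMk_out q, hpin, Rst_rbar_homMk]
    rfl
  have hrle : ∀ {A B : ParCat S} (f g : A ⟶ B),
      JS.toRestrictionStructure.rle f g ↔ (Rst S).rle f g := by
    intro A B f g
    unfold RestrictionStructure.rle
    rw [hrb]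
  have hcompat : ∀ {A B : ParCat S} (f g : A ⟶ B),
      JS.toRestrictionStructure.compat f g ↔ (Rst S).compat f g := by
    intro A B f g
    unfold RestrictionStructure.compat
    rw [hrb, hrb]
  intro ι A X m hm D
  set espan : ι → PartialHom S X X := fun i => ⟨A i, m i, hm i, m i⟩ with hespan
  set e := fun i => ParCat.homMk (S := S) (A := X) (B := X) (espan i) with he
  set T := Set.range e with hT
  have hcT : JS.toRestrictionStructure.setCompat T := by
    rintro f ⟨i, rfl⟩ g ⟨j, rfl⟩
    erw [hcompat]
    exact (compat_iff (espan i) (espan j) (D.isPB i j)).mpr (D.isPB i j).w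
  set j := JS.jn T with hj
  set g : PartialHom S X X := Quotient.out j with hgdef
  have hre : ∀ i, JS.rbar (e i) = e i := fun i => hpin X X (espan i)
  have hrbT : (fun f => JS.rbar f) '' T = T := by
    ext x
    constructor
    · rintro ⟨f', ⟨i, rfl⟩, rfl⟩
      show JS.rbar (e i) ∈ T
      rw [hre i]
      exact ⟨i, rfl⟩
    · rintro ⟨i, rfl⟩
      exact ⟨e i, ⟨i, rfl⟩, hre i⟩
  have hjj : JS.rbar j = j := by
    rw [hj, JS.j1 T hcT, hrbT]
  have hgfm : g.f = g.m := by
    have h1 : ParCat.homMk (S := S) (rbarSpan g) = ParCat.homMk (S := S) g := by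
      erw [← Rst_rbar_homMk, hgdef, homMk_out j, ← hrb, hjj]
    obtain ⟨φ, e1, e2⟩ := Quotient.exact h1
    haveI := S.mono _ g.hm
    have hφ : φ.hom = 𝟙 _ := by
      erw [← cancel_mono g.m, Category.id_comp]
      exact e1
    have e2' : φ.hom ≫ g.f = g.m := e2
    erw [hφ, Category.id_comp] at e2'
    exact e2'
  haveI monoμ : Mono g.m := S.mono _ g.hm
  have haex : ∀ i, ∃ k : A i ⟶ g.dom, k ≫ g.m = m i ∧ k ≫ g.f = m i := by
    intro i
    have hup := JS.jn_upper T hcT (e i) ⟨i, rfl⟩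
    erw [hrle, ← hj, ← homMk_out j, ← hgdef] at hup
    exact (rle_iff (espan i) g).mp hup
  choose a ha1 ha2 using haex
  -- the stability statement, proved uniformly
  have main : ∀ {B : C} (f : B ⟶ X) {A' : ι → C} (m' : ∀ i, A' i ⟶ B)
      (q : ∀ i, A' i ⟶ A i), (∀ i, IsPullback (m' i) (q i) f (m i)) →
      ∀ {U' : C} (μ' : U' ⟶ B) (r : U' ⟶ g.dom), IsPullback μ' r f g.m →
      ∀ (a' : ∀ i, A' i ⟶ U'), (∀ i, a' i ≫ μ' = m' i) →
        (∀ i, a' i ≫ r = q i ≫ a i) →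
      ∀ (D' : MatchingData m'), IsMatchingColimit D' U' a' := by
    intro B f A' m' q hpb U' μ' r hpbμ a' ha'1 ha'2 D'
    have hM' : ∀ i, S.M (m' i) := fun i => M_of_isPullback (hpb i) (hm i)
    have hMμ' : S.M μ' := M_of_isPullback hpbμ g.hm
    haveI monoμ' : Mono μ' := S.mono _ hMμ'
    constructor
    · -- the compatibility condition on U'
      intro i j'
      have wcone : (D'.p₁ i j' ≫ q i) ≫ m i = (D'.p₂ i j' ≫ q j') ≫ m j' := by
        rw [Category.assoc, ← (hpb i).w, Category.assoc, ← (hpb j').w,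
          ← Category.assoc, ← Category.assoc, (D'.isPB i j').w]
      have hu1 := (D.isPB i j').lift_fst _ _ wcone
      have hu2 := (D.isPB i j').lift_snd _ _ wcone
      apply hpbμ.hom_ext
      · rw [Category.assoc, Category.assoc, ha'1, ha'1]
        exact (D'.isPB i j').w
      · rw [Category.assoc, Category.assoc, ha'2, ha'2]
        have hba : D.p₁ i j' ≫ a i = D.p₂ i j' ≫ a j' := by
          rw [← cancel_mono g.m, Category.assoc, Category.assoc, ha1, ha1]
          exact (D.isPB i j').w
        calc D'.p₁ i j' ≫ q i ≫ a i
            = ((D.isPB i j').lift _ _ wcone ≫ D.p₁ i j') ≫ a i := by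
              rw [hu1, Category.assoc]
        _ = (D.isPB i j').lift _ _ wcone ≫ D.p₂ i j' ≫ a j' := by
              rw [Category.assoc, hba]
        _ = D'.p₂ i j' ≫ q j' ≫ a j' := by rw [← Category.assoc, hu2, Category.assoc]
    · -- the universal property on U'
      intro E b' hb'
      set fsp : PartialHom S B X := ⟨B, 𝟙 B, S.iso _ inferInstance, f⟩ with hfsp
      set T' := (fun x => ParCat.homMk (S := S) (A := B) (B := X) fsp ≫ x) '' T with hT'
      have hcT' : JS.toRestrictionStructure.setCompat T' := by
        rintro x ⟨x', hx', rfl⟩ y ⟨y', hy', rfl⟩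
        exact JS.toRestrictionStructure.compat_precomp _ (hcT x' hx' y' hy')
      have hMM : S.M (μ' ≫ fsp.m) := S.comp _ _ hMμ' (S.iso _ inferInstance)
      have hs : JS.jn T' = ParCat.homMk (S := S) ⟨U', μ' ≫ fsp.m, hMM, r ≫ g.f⟩ := by
        rw [← JS.j2 T hcT (ParCat.homMk (S := S) fsp)]
        conv_lhs => rw [← hj, ← homMk_out j, ← hgdef]
        exact comp_eq_of_isPullback fsp g hpbμ hMM
      set ψs : ι → PartialHom S B E := fun i => ⟨A' i, m' i, hM' i, b' i⟩ with hψs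
      set ψ := fun i => ParCat.homMk (S := S) (A := B) (B := E) (ψs i) with hψ
      set T'' := Set.range ψ with hT''
      have hcT'' : JS.toRestrictionStructure.setCompat T'' := by
        rintro x ⟨i, rfl⟩ y ⟨i', rfl⟩
        erw [hcompat]
        exact (compat_iff (ψs i) (ψs i') (D'.isPB i i')).mpr (hb' i i')
      have hcompe : ∀ i, ParCat.homMk (S := S) fsp ≫ e i =
          ParCat.homMk (S := S) ⟨A' i, m' i ≫ fsp.m,
            S.comp _ _ (hM' i) (S.iso _ inferInstance), q i ≫ (espan i).f⟩ :=
        fun i => comp_eq_of_isPullback fsp (espan i) (hpb i)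
          (S.comp _ _ (hM' i) (S.iso _ inferInstance))
      have hri : ∀ i, JS.rbar (ψ i) = JS.rbar (ParCat.homMk (S := S) fsp ≫ e i) := by
        intro i
        rw [hcompe i, hψ, hpin, hpin]
        apply Quotient.sound
        exact ⟨Iso.refl _, by simp [hfsp, id_comp_P]; exact Category.comp_id _,
          by simp [hfsp, id_comp_P]; exact Category.comp_id _⟩
      have himg : (fun x => JS.rbar x) '' T'' = (fun x => JS.rbar x) '' T' := by
        ext x
        constructor
        · rintro ⟨x', ⟨i, rfl⟩, rfl⟩
          exact ⟨ParCat.homMk (S := S) fsp ≫ e i, ⟨e i, ⟨i, rfl⟩, rfl⟩, (hri i).symm⟩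
        · rintro ⟨x', ⟨x'', ⟨i, rfl⟩, rfl⟩, rfl⟩
          exact ⟨ψ i, ⟨i, rfl⟩, hri i⟩
      have hrs : JS.rbar (JS.jn T'') = ParCat.homMk (S := S)
          ⟨U', μ' ≫ fsp.m, hMM, μ' ≫ fsp.m⟩ := by
        rw [JS.j1 T'' hcT'', himg, ← JS.j1 T' hcT', hs, hpin]
      set v : PartialHom S B E := Quotient.out (JS.jn T'') with hvdef
      have hv : ParCat.homMk (S := S) ⟨v.dom, v.m, v.hm, v.m⟩ =
          ParCat.homMk (S := S) ⟨U', μ' ≫ fsp.m, hMM, μ' ≫ fsp.m⟩ := by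
        rw [← hrs, ← homMk_out (JS.jn T''), hpin, ← hvdef]
      obtain ⟨θ, hθ1, hθ2⟩ := Quotient.exact hv
      have hθm : θ.hom ≫ μ' = v.m := by
        have := hθ1
        simp only [hfsp] at this
        exact (congrArg (θ.hom ≫ ·) (Category.comp_id μ')).symm.trans this
      have hlex : ∀ i, ∃ l : A' i ⟶ v.dom, l ≫ v.m = m' i ∧ l ≫ v.f = b' i := by
        intro i
        have hup := JS.jn_upper T'' hcT'' (ψ i) ⟨i, rfl⟩
        erw [hrle, ← homMk_out (JS.jn T''), ← hvdef] at hup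
        exact (rle_iff (ψs i) v).mp hup
      choose l hl1 hl2 using hlex
      have hla : ∀ i, l i ≫ θ.hom = a' i := by
        intro i
        rw [← cancel_mono μ', Category.assoc, hθm, hl1, ha'1]
      refine ⟨θ.inv ≫ v.f, fun i => ?_, fun t'' ht'' => ?_⟩
      · rw [← Category.assoc, ← hla i]
        simp [hl2 i]
      · -- uniqueness
        have hub : ∀ x ∈ T'', JS.toRestrictionStructure.rle x
            (ParCat.homMk (S := S) ⟨U', μ', hMμ', t''⟩) := by
          rintro x ⟨i, rfl⟩
          erw [hrle, hψ, rle_iff]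
          exact ⟨a' i, ha'1 i, ht'' i⟩
        have hle := JS.jn_least T'' hcT'' _ hub
        erw [hrle, ← homMk_out (JS.jn T''), ← hvdef, rle_iff] at hle
        obtain ⟨w, hw1, hw2⟩ := hle
        have hwθ : w = θ.hom := by
          rw [← cancel_mono μ', hθm, hw1]
        rw [← hw2, hwθ]
        simp
  -- now assemble the geometric data
  refine ⟨g.dom, a, g.m, ?_, ha1, g.hm, fun {B} f {A'} m' q hq {U'} μ' r hr a' h1 h2 D' =>
    main f m' q hq μ' r hr a' h1 h2 D'⟩
  exact main (𝟙 X) m (fun i => 𝟙 (A i))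
    (fun i => IsPullback.of_vert_isIso ⟨by simp⟩) g.m (𝟙 g.dom)
    (IsPullback.of_vert_isIso ⟨by simp⟩) a ha1 (fun i => by simp) D

end JRC

open JRC CategoryTheory in
/-- `Par(C, M)`, with restriction of `(m, f)` given by `(m, m)`, is a join restriction
category if and only if the `M`-category `(C, M)` is geometric: (1) colimits of matching
diagrams of families of `M`-subobjects exist, (2) the induced maps `⋁ᵢ mᵢ` lie in `M`,
and (3) these colimits are stable under pullback. -/
theorem stmt_3 {C : Type u} [Category.{v} C] (S : StableSystem C) :
    (∃ JS : JoinRestrictionStructure (ParCat S),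
      ∀ (A B : C) (h : PartialHom S A B),
        JS.rbar (ParCat.homMk (S := S) (A := A) (B := B) h) =
          ParCat.homMk (S := S) ⟨h.dom, h.m, h.hm, h.m⟩) ↔
    S.Geometric := by
  constructor
  · rintro ⟨JS, hpin⟩
    exact geometric_of_join JS hpin
  · intro hG
    exact ⟨mkJoin hG, fun A B h => rfl⟩
end

section
/- Let (C, M) be an M-category satisfying conditions (G1)–(G3). Then for every object C of C, the poset Sub_M(C) of M-subobjects of C is a complete Heyting algebra (a complete lattice in which binary meets distribute over arbitrary joins), and for every morphism f : D → C the pullback map f* : Sub_M(C) → Sub_M(D) preserves arbitrary joins. -/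
open CategoryTheory Limits Opposite

universe w v u

namespace JRC

open CategoryTheory Limits Opposite

variable {C : Type u} [Category.{v} C]

/-- An `M`-subobject of `X`: a map `m : dom ⟶ X` lying in `M`. -/
structure MSub (S : StableSystem C) (X : C) : Type max u v where
  dom : C
  m : dom ⟶ X
  hm : S.M m

instance MSub.preorder (S : StableSystem C) (X : C) : Preorder (MSub S X) where
  le n₁ n₂ := ∃ φ : n₁.dom ⟶ n₂.dom, φ ≫ n₂.m = n₁.m
  le_refl n := ⟨𝟙 _, Category.id_comp _⟩
  le_trans a b c := by
    rintro ⟨φ, hφ⟩ ⟨ψ, hψ⟩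
    exact ⟨φ ≫ ψ, by rw [Category.assoc, hψ, hφ]⟩

/-- The poset `Sub_M(X)` of `M`-subobjects of `X`: `M`-maps into `X` modulo mutual
factorisation (equivalently, modulo isomorphism of domains). -/
abbrev SubM (S : StableSystem C) (X : C) := Antisymmetrization (MSub S X) (· ≤ ·)

/-- The `M`-subobject represented by an `M`-map. -/
abbrev MSub.cls {S : StableSystem C} {X : C} (n : MSub S X) : SubM S X :=
  toAntisymmetrization (· ≤ ·) n

end JRC

namespace JRC

open CategoryTheory Limits

variable {C : Type u} [Category.{v} C]

lemma isPullback_comp_mono {P A B X Y : C} {p1 : P ⟶ A} {p2 : P ⟶ B}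
    {f : A ⟶ X} {g : B ⟶ X} {n : X ⟶ Y} (hn : Mono n)
    (h : IsPullback p1 p2 f g) : IsPullback p1 p2 (f ≫ n) (g ≫ n) := by
  have comm : p1 ≫ (f ≫ n) = p2 ≫ (g ≫ n) := by
    rw [← Category.assoc, h.w, Category.assoc]
  apply IsPullback.of_isLimit' ⟨comm⟩
  refine PullbackCone.IsLimit.mk _ (fun s => h.lift s.fst s.snd ?_) ?_ ?_ ?_
  · have := s.condition
    rw [← Category.assoc, ← Category.assoc] at this
    exact hn.right_cancellation _ _ this
  · intro s; exact h.lift_fst _ _ _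
  · intro s; exact h.lift_snd _ _ _
  · intro s t h1 h2
    apply h.hom_ext
    · rw [h1, h.lift_fst]
    · rw [h2, h.lift_snd]

/-- Choose matching data (pairwise pullbacks) for a family of `M`-maps. -/
noncomputable def mkMatchingData (S : StableSystem C) {ι : Type w} {A : ι → C} {X : C}
    (m : ∀ i, A i ⟶ X) (hm : ∀ i, S.M (m i)) : MatchingData m := by
  choose P p q hp hpb using fun i j => S.pullback (m i) (m j) (hm j)
  exact ⟨P, p, q, hpb⟩

lemma cls_le_cls {S : StableSystem C} {X : C} {n₁ n₂ : MSub S X} :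
    n₁.cls ≤ n₂.cls ↔ n₁ ≤ n₂ :=
  toAntisymmetrization_le_toAntisymmetrization_iff

/-- A matching colimit of a family of `M`-subobjects is the least upper bound in `Sub_M(X)`. -/
lemma join_isLUB {S : StableSystem C} {ι : Type w} {A : ι → C} {X : C}
    {m : ∀ i, A i ⟶ X} (hm : ∀ i, S.M (m i)) {D : MatchingData m}
    {U : C} {a : ∀ i, A i ⟶ U} {μ : U ⟶ X}
    (hcolim : IsMatchingColimit D U a) (hfac : ∀ i, a i ≫ μ = m i) (hμ : S.M μ) :
    IsLUB (Set.range fun i => MSub.cls ⟨A i, m i, hm i⟩) (MSub.cls ⟨U, μ, hμ⟩) := by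
  constructor
  · rintro x ⟨i, rfl⟩
    exact cls_le_cls.2 ⟨a i, hfac i⟩
  · intro g hg
    set ng := ofAntisymmetrization (· ≤ ·) g with hng
    have hgle : ∀ i, (⟨A i, m i, hm i⟩ : MSub S X) ≤ ng := by
      intro i
      have h := hg (Set.mem_range_self i)
      rw [← toAntisymmetrization_ofAntisymmetrization (· ≤ ·) g] at h
      exact cls_le_cls.1 h
    choose φ hφ using hgle
    have hmono : Mono ng.m := S.mono _ ng.hm
    have hcone : ∀ i j, D.p₁ i j ≫ φ i = D.p₂ i j ≫ φ j := by
      intro i j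
      apply hmono.right_cancellation
      rw [Category.assoc, Category.assoc, hφ i, hφ j, (D.isPB i j).w]
    obtain ⟨t, ht, -⟩ := hcolim.desc φ hcone
    have hconem : ∀ i j, D.p₁ i j ≫ m i = D.p₂ i j ≫ m j := fun i j => (D.isPB i j).w
    obtain ⟨s, hs, hsu⟩ := hcolim.desc m hconem
    have h1 : μ = s := hsu μ hfac
    have h2 : t ≫ ng.m = s := hsu _ (fun i => by rw [← Category.assoc, ht i, hφ i])
    have hle : (⟨U, μ, hμ⟩ : MSub S X) ≤ ng := ⟨t, by rw [h2, ← h1]⟩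
    rw [← toAntisymmetrization_ofAntisymmetrization (· ≤ ·) g]
    exact cls_le_cls.2 hle

/-- The pullback of two `M`-subobjects is their meet in `Sub_M(X)`. -/
lemma meet_isGLB {S : StableSystem C} {X : C} (n : MSub S X) {B : C} {m : B ⟶ X}
    (hmm : S.M m) {P : C} {p : P ⟶ n.dom} {q : P ⟶ B} (hp : S.M p)
    (hpb : IsPullback p q n.m m) :
    IsGLB {n.cls, MSub.cls ⟨B, m, hmm⟩}
      (MSub.cls ⟨P, p ≫ n.m, S.comp p n.m hp n.hm⟩) := by
  constructor
  · intro x hx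
    rcases hx with rfl | hx
    · exact cls_le_cls.2 ⟨p, rfl⟩
    · rcases hx with rfl
      exact cls_le_cls.2 ⟨q, hpb.w.symm⟩
  · intro c hc
    set nc := ofAntisymmetrization (· ≤ ·) c with hnc
    have h1 : nc ≤ n := by
      have h := hc (Set.mem_insert _ _)
      rw [← toAntisymmetrization_ofAntisymmetrization (· ≤ ·) c] at h
      exact cls_le_cls.1 h
    have h2 : nc ≤ (⟨B, m, hmm⟩ : MSub S X) := by
      have h := hc (Set.mem_insert_of_mem _ rfl)
      rw [← toAntisymmetrization_ofAntisymmetrization (· ≤ ·) c] at h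
      exact cls_le_cls.1 h
    obtain ⟨φ, hφ⟩ := h1
    obtain ⟨ψ, hψ⟩ := h2
    have hw : φ ≫ n.m = ψ ≫ m := by rw [hφ, hψ]
    have hle : nc ≤ (⟨P, p ≫ n.m, S.comp p n.m hp n.hm⟩ : MSub S X) :=
      ⟨hpb.lift φ ψ hw, by rw [← Category.assoc, hpb.lift_fst, hφ]⟩
    rw [← toAntisymmetrization_ofAntisymmetrization (· ≤ ·) c]
    exact cls_le_cls.2 hle

end JRC

open JRC CategoryTheory in
/-- In a geometric `M`-category, `Sub_M(X)` is a complete Heyting algebra (all joins and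
meets exist and binary meets distribute over arbitrary joins), and pullback
`f* : Sub_M(X) → Sub_M(D)` along any `f : D ⟶ X` preserves arbitrary joins. -/
theorem stmt_5 {C : Type u} [Category.{v} C] (S : StableSystem C) (hgeo : S.Geometric) (X : C) :
    (∀ T : Set (SubM S X), ∃ j, IsLUB T j) ∧
    (∀ T : Set (SubM S X), ∃ g, IsGLB T g) ∧
    (∀ (a : SubM S X) (T : Set (SubM S X)) (j : SubM S X), IsLUB T j →
      ∀ mj : SubM S X, IsGLB {a, j} mj →
        IsLUB {c | ∃ b ∈ T, IsGLB {a, b} c} mj) ∧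
    (∀ {D : C} (f : D ⟶ X) (F : SubM S X → SubM S D),
      (∀ n : MSub S X, ∃ (n' : MSub S D) (q : n'.dom ⟶ n.dom),
        IsPullback n'.m q f n.m ∧ F n.cls = n'.cls) →
      ∀ (T : Set (SubM S X)) (j : SubM S X), IsLUB T j → IsLUB (F '' T) (F j)) := by
  classical
  -- a reusable construction of the join of an arbitrary set of M-subobjects
  have key : ∀ T : Set (SubM S X),
      ∃ (U : C) (μ : U ⟶ X) (hμ : S.M μ), IsLUB T (MSub.cls ⟨U, μ, hμ⟩) := by
    intro T
    set nm : T → MSub S X := fun i => ofAntisymmetrization (· ≤ ·) i.val with hnm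
    set m : ∀ i : T, (nm i).dom ⟶ X := fun i => (nm i).m with hmdef
    have hm : ∀ i, S.M (m i) := fun i => (nm i).hm
    obtain ⟨U, a₀, μ, hcolim, hfac, hμ, -⟩ := hgeo m hm (mkMatchingData S m hm)
    have hlub := join_isLUB hm hcolim hfac hμ
    have hrange : (Set.range fun i : T =>
        MSub.cls ⟨(nm i).dom, m i, hm i⟩) = T := by
      ext x
      constructor
      · rintro ⟨i, rfl⟩
        show MSub.cls ⟨(nm i).dom, m i, hm i⟩ ∈ T
        have h : MSub.cls ⟨(nm i).dom, m i, hm i⟩ = i.val :=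
          toAntisymmetrization_ofAntisymmetrization _ _
        rw [h]
        exact i.2
      · intro hx
        exact ⟨⟨x, hx⟩, toAntisymmetrization_ofAntisymmetrization _ _⟩
    exact ⟨U, μ, hμ, hrange ▸ hlub⟩
  have part1 : ∀ T : Set (SubM S X), ∃ j, IsLUB T j := by
    intro T
    obtain ⟨U, μ, hμ, h⟩ := key T
    exact ⟨_, h⟩
  have part2 : ∀ T : Set (SubM S X), ∃ g, IsGLB T g := by
    intro T
    obtain ⟨g, hg⟩ := part1 (lowerBounds T)
    refine ⟨g, ?_, ?_⟩
    · intro t ht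
      exact hg.2 (fun lb hlb => hlb ht)
    · intro lb hlb
      exact hg.1 hlb
  refine ⟨part1, part2, ?_, ?_⟩
  · -- distributivity
    intro a T j hj mj hmj
    set na := ofAntisymmetrization (· ≤ ·) a with hna
    have hacls : na.cls = a := toAntisymmetrization_ofAntisymmetrization _ _
    set nm : T → MSub S X := fun i => ofAntisymmetrization (· ≤ ·) i.val with hnm
    set m : ∀ i : T, (nm i).dom ⟶ X := fun i => (nm i).m with hmdef
    have hm : ∀ i, S.M (m i) := fun i => (nm i).hm
    obtain ⟨U, a₀, μ, hcolim, hfac, hμ, hstab⟩ := hgeo m hm (mkMatchingData S m hm)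
    have hlub := join_isLUB hm hcolim hfac hμ
    have hrange : (Set.range fun i : T =>
        MSub.cls ⟨(nm i).dom, m i, hm i⟩) = T := by
      ext x
      constructor
      · rintro ⟨i, rfl⟩
        show MSub.cls ⟨(nm i).dom, m i, hm i⟩ ∈ T
        have h : MSub.cls ⟨(nm i).dom, m i, hm i⟩ = i.val :=
          toAntisymmetrization_ofAntisymmetrization _ _
        rw [h]
        exact i.2
      · intro hx
        exact ⟨⟨x, hx⟩, toAntisymmetrization_ofAntisymmetrization _ _⟩
    have hjeq : j = MSub.cls ⟨U, μ, hμ⟩ := hj.unique (hrange ▸ hlub)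
    obtain ⟨U', μ', r, hμ', hpbU⟩ := S.pullback na.m μ hμ
    choose A' m' q hm' hpbi using fun i => S.pullback na.m (m i) (hm i)
    have hwl : ∀ i, m' i ≫ na.m = (q i ≫ a₀ i) ≫ μ := by
      intro i
      rw [(hpbi i).w, Category.assoc, hfac i]
    set a' : ∀ i, A' i ⟶ U' := fun i => hpbU.lift (m' i) (q i ≫ a₀ i) (hwl i) with ha'
    have ha'μ : ∀ i, a' i ≫ μ' = m' i := fun i => hpbU.lift_fst _ _ _
    have ha'r : ∀ i, a' i ≫ r = q i ≫ a₀ i := fun i => hpbU.lift_snd _ _ _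
    have hcolim' : IsMatchingColimit (mkMatchingData S m' hm') U' a' :=
      hstab na.m m' q hpbi μ' r hpbU a' ha'μ ha'r _
    have hmono : Mono na.m := S.mono _ na.hm
    set D'' : MatchingData (fun i => m' i ≫ na.m) :=
      ⟨(mkMatchingData S m' hm').P, (mkMatchingData S m' hm').p₁,
        (mkMatchingData S m' hm').p₂,
        fun i j => isPullback_comp_mono hmono ((mkMatchingData S m' hm').isPB i j)⟩
      with hD''
    have hcolim'' : IsMatchingColimit D'' U' a' := ⟨hcolim'.w, hcolim'.desc⟩
    have hm'' : ∀ i, S.M (m' i ≫ na.m) := fun i => S.comp _ _ (hm' i) na.hm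
    have hμ'' : S.M (μ' ≫ na.m) := S.comp _ _ hμ' na.hm
    have hfac'' : ∀ i, a' i ≫ (μ' ≫ na.m) = m' i ≫ na.m := by
      intro i
      rw [← Category.assoc, ha'μ i]
    have hlub2 := join_isLUB hm'' hcolim'' hfac'' hμ''
    have hmeet : ∀ i : T, IsGLB {a, (nm i).cls}
        (MSub.cls ⟨A' i, m' i ≫ na.m, hm'' i⟩) := by
      intro i
      have h := meet_isGLB na (hm i) (hm' i) (hpbi i)
      rwa [hacls] at h
    have hmeetj : IsGLB {a, j} (MSub.cls ⟨U', μ' ≫ na.m, hμ''⟩) := by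
      rw [hjeq]
      have h := meet_isGLB na hμ hμ' hpbU
      rwa [hacls] at h
    have hmjeq : mj = MSub.cls ⟨U', μ' ≫ na.m, hμ''⟩ := hmj.unique hmeetj
    have hset : {c | ∃ b ∈ T, IsGLB {a, b} c} =
        Set.range (fun i : T => MSub.cls ⟨A' i, m' i ≫ na.m, hm'' i⟩) := by
      ext c
      constructor
      · rintro ⟨b, hb, hc⟩
        refine ⟨⟨b, hb⟩, ?_⟩
        have hcls : (nm ⟨b, hb⟩).cls = b :=
          toAntisymmetrization_ofAntisymmetrization _ _
        have h2 := hmeet ⟨b, hb⟩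
        rw [hcls] at h2
        exact (hc.unique h2).symm
      · rintro ⟨i, rfl⟩
        refine ⟨i.val, i.2, ?_⟩
        have hcls : (nm i).cls = i.val :=
          toAntisymmetrization_ofAntisymmetrization _ _
        have h2 := hmeet i
        rwa [hcls] at h2
    rw [hset, hmjeq]
    exact hlub2
  · -- pullback preserves joins
    intro D f F hF T j hj
    set nm : T → MSub S X := fun i => ofAntisymmetrization (· ≤ ·) i.val with hnm
    set m : ∀ i : T, (nm i).dom ⟶ X := fun i => (nm i).m with hmdef
    have hm : ∀ i, S.M (m i) := fun i => (nm i).hm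
    obtain ⟨U, a₀, μ, hcolim, hfac, hμ, hstab⟩ := hgeo m hm (mkMatchingData S m hm)
    have hlub := join_isLUB hm hcolim hfac hμ
    have hrange : (Set.range fun i : T =>
        MSub.cls ⟨(nm i).dom, m i, hm i⟩) = T := by
      ext x
      constructor
      · rintro ⟨i, rfl⟩
        show MSub.cls ⟨(nm i).dom, m i, hm i⟩ ∈ T
        have h : MSub.cls ⟨(nm i).dom, m i, hm i⟩ = i.val :=
          toAntisymmetrization_ofAntisymmetrization _ _
        rw [h]
        exact i.2
      · intro hx
        exact ⟨⟨x, hx⟩, toAntisymmetrization_ofAntisymmetrization _ _⟩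
    have hjeq : j = MSub.cls ⟨U, μ, hμ⟩ := hj.unique (hrange ▸ hlub)
    obtain ⟨nU', rU, hpbU, hFU⟩ := hF ⟨U, μ, hμ⟩
    choose n' q hpbi hFi using fun i : T => hF (nm i)
    have hwl : ∀ i, (n' i).m ≫ f = (q i ≫ a₀ i) ≫ μ := by
      intro i
      rw [(hpbi i).w, Category.assoc, hfac i]
    set a' : ∀ i, (n' i).dom ⟶ nU'.dom :=
      fun i => hpbU.lift ((n' i).m) (q i ≫ a₀ i) (hwl i) with ha'
    have ha'μ : ∀ i, a' i ≫ nU'.m = (n' i).m := fun i => hpbU.lift_fst _ _ _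
    have ha'r : ∀ i, a' i ≫ rU = q i ≫ a₀ i := fun i => hpbU.lift_snd _ _ _
    have hcolim' : IsMatchingColimit
        (mkMatchingData S (fun i => (n' i).m) (fun i => (n' i).hm)) nU'.dom a' :=
      hstab f (fun i => (n' i).m) q hpbi nU'.m rU hpbU a' ha'μ ha'r _
    have hlub' := join_isLUB (fun i => (n' i).hm) hcolim' ha'μ nU'.hm
    have himg : F '' T = Set.range (fun i : T =>
        MSub.cls ⟨(n' i).dom, (n' i).m, (n' i).hm⟩) := by
      ext x
      constructor
      · rintro ⟨b, hb, rfl⟩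
        refine ⟨⟨b, hb⟩, ?_⟩
        have h1 := hFi ⟨b, hb⟩
        have h2 : MSub.cls (nm ⟨b, hb⟩) = b :=
          toAntisymmetrization_ofAntisymmetrization _ _
        rw [h2] at h1
        exact h1.symm
      · rintro ⟨i, rfl⟩
        refine ⟨i.val, i.2, ?_⟩
        have h1 := hFi i
        have h2 : MSub.cls (nm i) = i.val :=
          toAntisymmetrization_ofAntisymmetrization _ _
        rw [h2] at h1
        exact h1
    have hFj : F j = MSub.cls ⟨nU'.dom, nU'.m, nU'.hm⟩ := by
      rw [hjeq]
      exact hFU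
    rw [himg, hFj]
    exact hlub'
end

section
/- Let (C, M) be a small M-category satisfying conditions (G1)–(G3). Then the assignment to each object C of the collection of families { a_i : C_i → C }_{i∈I} with each a_i ∈ M and ⋁_{i∈I} a_i = 1 in Sub_M(C) (equivalently: C is the colimit of the matching diagram of {a_i}) is a basis for a Grothendieck topology on C; that is, it contains the singleton family {1_C}, is stable under pullback along arbitrary morphisms, and is closed under composition of covers. -/
open CategoryTheory Limits Opposite

universe w v u

namespace JRC

open CategoryTheory Limits Opposite

variable {C : Type u} [SmallCategory C]

/-- A presieve `R` on `X` is an *`M`-cover* when all its maps lie in `M` and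
`⋁_{f ∈ R} f = 1` in `Sub_M(X)`, i.e. `X` is the colimit of the matching diagram of the
family `R` (with the maps of `R` as colimit injections). -/
def IsMCover (S : StableSystem C) (X : C) (R : Presieve X) : Prop :=
  (∀ ⦃Y : C⦄ (f : Y ⟶ X), R f → S.M f) ∧
  ∀ D : MatchingData (A := fun p : (Σ Y : C, {f : Y ⟶ X // R f}) => p.1) (X := X)
      (fun p => p.2.1),
    IsMatchingColimit D X fun p => p.2.1

end JRC

namespace JRC

open CategoryTheory Limits

variable {C : Type u} [SmallCategory C]

/-- Any `M`-family admits a choice of matching data. -/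
lemma nonempty_matchingData (S : StableSystem C) {ι : Type w} {A : ι → C} {X : C}
    (m : ∀ i, A i ⟶ X) (hm : ∀ i, S.M (m i)) : Nonempty (MatchingData m) := by
  choose P p q hMp hPB using fun i j => S.pullback (m i) (m j) (hm j)
  exact ⟨⟨P, p, q, hPB⟩⟩

/-- Matching-compatible data is compatible over any cone over a pair of the family. -/
lemma matching_compat {ι : Type w} {A : ι → C} {X : C} {m : ∀ i, A i ⟶ X}
    (D : MatchingData m) {B : C} (b : ∀ i, A i ⟶ B)
    (hb : ∀ i j, D.p₁ i j ≫ b i = D.p₂ i j ≫ b j)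
    (x y : ι) {W : C} (u : W ⟶ A x) (v : W ⟶ A y) (hw : u ≫ m x = v ≫ m y) :
    u ≫ b x = v ≫ b y := by
  have e1 := (D.isPB x y).lift_fst u v hw
  have e2 := (D.isPB x y).lift_snd u v hw
  calc u ≫ b x = ((D.isPB x y).lift u v hw ≫ D.p₁ x y) ≫ b x := by rw [e1]
    _ = ((D.isPB x y).lift u v hw ≫ D.p₂ x y) ≫ b y := by
        rw [Category.assoc, Category.assoc, hb x y]
    _ = v ≫ b y := by rw [e2]

/-- Colimit injections of a matching colimit are jointly epic. -/
lemma IsMatchingColimit.hom_ext {ι : Type w} {A : ι → C} {X : C} {m : ∀ i, A i ⟶ X}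
    {D : MatchingData m} {U : C} {a : ∀ i, A i ⟶ U} (h : IsMatchingColimit D U a)
    {T : C} {u v : U ⟶ T} (he : ∀ i, a i ≫ u = a i ≫ v) : u = v := by
  obtain ⟨t, _, ht⟩ := h.desc (fun i => a i ≫ u)
    (fun i j => by rw [← Category.assoc, ← Category.assoc, h.w])
  rw [ht u (fun i => rfl), ht v (fun i => (he i).symm)]

/-- A matching colimit for one family is a matching colimit for any mutually refining
family. -/
lemma refineCover {ι : Type w} {κ : Type w'} {A' : ι → C} {B : κ → C} {P : C}
    {m' : ∀ i, A' i ⟶ P} {n : ∀ k, B k ⟶ P}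
    (D' : MatchingData m') (hcol : IsMatchingColimit D' P m')
    (h1 : ∀ i, ∃ (k : κ) (φ : A' i ⟶ B k), φ ≫ n k = m' i)
    (h2 : ∀ k, ∃ (i : ι) (e : B k ⟶ A' i), e ≫ m' i = n k)
    (D'' : MatchingData n) : IsMatchingColimit D'' P n := by
  choose k φ hφ using h1
  choose idx e he using h2
  constructor
  · intro x y
    exact (D''.isPB x y).w
  · intro T b hb
    have hcompat : ∀ i j, D'.p₁ i j ≫ (φ i ≫ b (k i)) = D'.p₂ i j ≫ (φ j ≫ b (k j)) := by
      intro i j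
      have hw : (D'.p₁ i j ≫ φ i) ≫ n (k i) = (D'.p₂ i j ≫ φ j) ≫ n (k j) := by
        rw [Category.assoc, Category.assoc, hφ, hφ, (D'.isPB i j).w]
      rw [← Category.assoc, ← Category.assoc]
      exact matching_compat D'' b hb _ _ _ _ hw
    obtain ⟨t, ht, huniq⟩ := hcol.desc (fun i => φ i ≫ b (k i)) hcompat
    have key : ∀ x, n x ≫ t = b x := by
      intro x
      have hfac : n x ≫ t = (e x ≫ φ (idx x)) ≫ b (k (idx x)) := by
        rw [← he x, Category.assoc, ht (idx x), Category.assoc]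
      have hw : (𝟙 (B x)) ≫ n x = (e x ≫ φ (idx x)) ≫ n (k (idx x)) := by
        rw [Category.id_comp, Category.assoc, hφ, he]
      rw [hfac, ← matching_compat D'' b hb _ _ _ _ hw, Category.id_comp]
    refine ⟨t, key, ?_⟩
    intro t' ht'
    refine huniq t' (fun i => ?_)
    rw [← hφ i, Category.assoc, ht' (k i)]

/-- Pullback stability of matching colimits (covers pull back to covers). -/
lemma pullCover (S : StableSystem C) (hgeo : S.Geometric) {ι : Type u} {A : ι → C} {Y : C}
    (m : ∀ i, A i ⟶ Y) (hm : ∀ i, S.M (m i)) (hcol : ∀ D : MatchingData m, IsMatchingColimit D Y m)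
    {P : C} (f : P ⟶ Y) {A' : ι → C} {m' : ∀ i, A' i ⟶ P} {q : ∀ i, A' i ⟶ A i}
    (hpb : ∀ i, IsPullback (m' i) (q i) f (m i)) (D' : MatchingData m') :
    IsMatchingColimit D' P m' := by
  obtain ⟨D₀⟩ := nonempty_matchingData S m hm
  obtain ⟨U, a, μ, hU, haμ, hMμ, hstab⟩ := hgeo m hm D₀
  have hY := hcol D₀
  obtain ⟨t, ht, htu⟩ := hY.desc a hU.w
  have hμt : μ ≫ t = 𝟙 U := by
    obtain ⟨s, hs, hsu⟩ := hU.desc a hU.w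
    rw [hsu (μ ≫ t) (fun i => by rw [← Category.assoc, haμ, ht]),
      hsu (𝟙 U) (fun i => Category.comp_id _)]
  have htμ : t ≫ μ = 𝟙 Y := by
    obtain ⟨s, hs, hsu⟩ := hY.desc m hY.w
    rw [hsu (t ≫ μ) (fun i => by rw [← Category.assoc, ht, haμ]),
      hsu (𝟙 Y) (fun i => Category.comp_id _)]
  haveI : IsIso μ := ⟨t, hμt, htμ⟩
  have hsq : IsPullback (𝟙 P) (f ≫ t) f μ :=
    IsPullback.of_horiz_isIso ⟨by rw [Category.id_comp, Category.assoc, htμ, Category.comp_id]⟩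
  exact hstab f m' q hpb (𝟙 P) (f ≫ t) hsq m' (fun i => Category.comp_id _)
    (fun i => by rw [← Category.assoc, (hpb i).w, Category.assoc, ht i]) D'

end JRC

open JRC CategoryTheory in
/-- The `M`-covers of a small geometric `M`-category form a basis for a Grothendieck
topology: the identity singleton is a cover, covers are stable under pullback along
arbitrary maps, and covers are closed under composition (`bind`). -/
theorem stmt_6 {C : Type u} [SmallCategory C] (S : StableSystem C) (hgeo : S.Geometric) :
    (∀ X : C, IsMCover S X (Presieve.singleton (𝟙 X))) ∧
    (∀ (X D : C) (R : Presieve X) (f : D ⟶ X), IsMCover S X R →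
      IsMCover S D (fun Y g => ∃ (Z : C) (h : Z ⟶ X), R h ∧ ∃ q : Y ⟶ Z, IsPullback g q f h)) ∧
    (∀ (X : C) (R : Presieve X) (T : ∀ ⦃Y⦄ ⦃f : Y ⟶ X⦄, R f → Presieve Y),
      IsMCover S X R → (∀ (Y : C) (f : Y ⟶ X) (hf : R f), IsMCover S Y (T hf)) →
      IsMCover S X (R.bind T)) := by
  refine ⟨?_, ?_, ?_⟩
  · -- identity cover
    intro X
    refine ⟨?_, ?_⟩
    · rintro Y f ⟨⟩
      exact S.iso _ inferInstance
    · intro D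
      have hidx : ∀ p : (Σ Y : C, {f : Y ⟶ X // Presieve.singleton (𝟙 X) f}),
          p = ⟨X, ⟨𝟙 X, Presieve.singleton.mk⟩⟩ := by
        rintro ⟨Y, f, hf⟩
        cases hf
        rfl
      refine ⟨fun i j => (D.isPB i j).w, ?_⟩
      intro B b hb
      refine ⟨b ⟨X, ⟨𝟙 X, Presieve.singleton.mk⟩⟩, ?_, ?_⟩
      · intro i
        rw [hidx i]
        simp
      · intro t' ht'
        have := ht' ⟨X, ⟨𝟙 X, Presieve.singleton.mk⟩⟩
        simpa using this
  · -- pullback stability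
    intro X W R f hR
    choose A' m' q hM' hpb using fun i : (Σ Y : C, {h : Y ⟶ X // R h}) =>
      S.pullback f i.2.1 (hR.1 i.2.1 i.2.2)
    refine ⟨?_, ?_⟩
    · rintro Y g ⟨Z, h, hRh, qg, hgpb⟩
      have hfac := hgpb.isoIsPullback_hom_fst _ _ (hpb ⟨Z, ⟨h, hRh⟩⟩)
      rw [← hfac]
      exact S.comp _ _ (S.iso _ inferInstance) (hM' ⟨Z, ⟨h, hRh⟩⟩)
    · intro D''
      obtain ⟨D'⟩ := nonempty_matchingData S m' hM'
      have hcolm' : IsMatchingColimit D' W m' :=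
        pullCover S hgeo (fun p : (Σ Y : C, {h : Y ⟶ X // R h}) => p.2.1)
          (fun i => hR.1 i.2.1 i.2.2) hR.2 f hpb D'
      refine refineCover D' hcolm' ?_ ?_ D''
      · intro i
        exact ⟨⟨A' i, ⟨m' i, ⟨i.1, i.2.1, i.2.2, q i, hpb i⟩⟩⟩, 𝟙 _, Category.id_comp _⟩
      · rintro ⟨Y, g, Z, h, hRh, qg, hgpb⟩
        exact ⟨⟨Z, ⟨h, hRh⟩⟩, (hgpb.isoIsPullback _ _ (hpb ⟨Z, ⟨h, hRh⟩⟩)).hom,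
          hgpb.isoIsPullback_hom_fst _ _ (hpb ⟨Z, ⟨h, hRh⟩⟩)⟩
  · -- composition / bind
    intro X R T hR hT
    refine ⟨?_, ?_⟩
    · rintro Z k ⟨Y, g, h, hRh, hTg, rfl⟩
      exact S.comp _ _ ((hT Y h hRh).1 g hTg) (hR.1 h hRh)
    · intro Dbind
      refine ⟨fun x y => (Dbind.isPB x y).w, ?_⟩
      intro B b hb
      have hdesc : ∀ i : (Σ Y : C, {h : Y ⟶ X // R h}),
          ∃ c : i.1 ⟶ B,
            (∀ j : (Σ Z : C, {g : Z ⟶ i.1 // T i.2.2 g}),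
              j.2.1 ≫ c = b ⟨j.1, ⟨j.2.1 ≫ i.2.1, ⟨i.1, j.2.1, i.2.1, i.2.2, j.2.2, rfl⟩⟩⟩) ∧
            (∀ c', (∀ j : (Σ Z : C, {g : Z ⟶ i.1 // T i.2.2 g}),
              j.2.1 ≫ c' = b ⟨j.1, ⟨j.2.1 ≫ i.2.1, ⟨i.1, j.2.1, i.2.1, i.2.2, j.2.2, rfl⟩⟩⟩) →
              c' = c) := by
        intro i
        obtain ⟨Di⟩ := nonempty_matchingData S
          (fun j : (Σ Z : C, {g : Z ⟶ i.1 // T i.2.2 g}) => j.2.1)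
          (fun j => (hT i.1 i.2.1 i.2.2).1 j.2.1 j.2.2)
        have hYcol := (hT i.1 i.2.1 i.2.2).2 Di
        obtain ⟨c, hc1, hc2⟩ := hYcol.desc
          (fun j => b ⟨j.1, ⟨j.2.1 ≫ i.2.1, ⟨i.1, j.2.1, i.2.1, i.2.2, j.2.2, rfl⟩⟩⟩)
          (by
            intro j j'
            refine matching_compat Dbind b hb
              ⟨j.1, ⟨j.2.1 ≫ i.2.1, ⟨i.1, j.2.1, i.2.1, i.2.2, j.2.2, rfl⟩⟩⟩
              ⟨j'.1, ⟨j'.2.1 ≫ i.2.1, ⟨i.1, j'.2.1, i.2.1, i.2.2, j'.2.2, rfl⟩⟩⟩ _ _ ?_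
            show Di.p₁ j j' ≫ j.2.1 ≫ i.2.1 = Di.p₂ j j' ≫ j'.2.1 ≫ i.2.1
            have hwj : Di.p₁ j j' ≫ j.2.1 = Di.p₂ j j' ≫ j'.2.1 := (Di.isPB j j').w
            rw [← Category.assoc, hwj, Category.assoc])
        exact ⟨c, hc1, hc2⟩
      choose c hc hcu using hdesc
      obtain ⟨DR⟩ := nonempty_matchingData S
        (fun i : (Σ Y : C, {h : Y ⟶ X // R h}) => i.2.1) (fun i => hR.1 i.2.1 i.2.2)
      have hXcol := hR.2 DR
      have hccompat : ∀ i i', DR.p₁ i i' ≫ c i = DR.p₂ i i' ≫ c i' := by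
        intro i i'
        choose Wn rn sn hMr hpbr using
          fun j : (Σ Z : C, {g : Z ⟶ i.1 // T i.2.2 g}) =>
            S.pullback (DR.p₁ i i') j.2.1 ((hT i.1 i.2.1 i.2.2).1 j.2.1 j.2.2)
        obtain ⟨Dr⟩ := nonempty_matchingData S rn hMr
        have hrcol : IsMatchingColimit Dr (DR.P i i') rn :=
          pullCover S hgeo (fun p : (Σ Z : C, {g : Z ⟶ i.1 // T i.2.2 g}) => p.2.1)
            (fun j => (hT i.1 i.2.1 i.2.2).1 j.2.1 j.2.2)
            (hT i.1 i.2.1 i.2.2).2 (DR.p₁ i i') hpbr Dr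
        refine hrcol.hom_ext (fun j => ?_)
        choose Wn' rn' sn' hMr' hpbr' using
          fun j' : (Σ Z : C, {g : Z ⟶ i'.1 // T i'.2.2 g}) =>
            S.pullback (rn j ≫ DR.p₂ i i') j'.2.1 ((hT i'.1 i'.2.1 i'.2.2).1 j'.2.1 j'.2.2)
        obtain ⟨Dr'⟩ := nonempty_matchingData S rn' hMr'
        have hrcol' : IsMatchingColimit Dr' (Wn j) rn' :=
          pullCover S hgeo (fun p : (Σ Z : C, {g : Z ⟶ i'.1 // T i'.2.2 g}) => p.2.1)
            (fun j' => (hT i'.1 i'.2.1 i'.2.2).1 j'.2.1 j'.2.2)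
            (hT i'.1 i'.2.1 i'.2.2).2 (rn j ≫ DR.p₂ i i') hpbr' Dr'
        refine hrcol'.hom_ext (fun j' => ?_)
        have w1 : rn j ≫ DR.p₁ i i' = sn j ≫ j.2.1 := (hpbr j).w
        have w2 : rn' j' ≫ (rn j ≫ DR.p₂ i i') = sn' j' ≫ j'.2.1 := (hpbr' j').w
        have wD : DR.p₁ i i' ≫ i.2.1 = DR.p₂ i i' ≫ i'.2.1 := (DR.isPB i i').w
        have w1' := reassoc_of% w1
        have w2' := reassoc_of% w2
        have wD' := reassoc_of% wD
        have hci : j.2.1 ≫ c i =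
            b ⟨j.1, ⟨j.2.1 ≫ i.2.1, ⟨i.1, j.2.1, i.2.1, i.2.2, j.2.2, rfl⟩⟩⟩ := hc i j
        have hci' : j'.2.1 ≫ c i' =
            b ⟨j'.1, ⟨j'.2.1 ≫ i'.2.1, ⟨i'.1, j'.2.1, i'.2.1, i'.2.2, j'.2.2, rfl⟩⟩⟩ := hc i' j'
        have hmain : (rn' j' ≫ sn j) ≫
              b ⟨j.1, ⟨j.2.1 ≫ i.2.1, ⟨i.1, j.2.1, i.2.1, i.2.2, j.2.2, rfl⟩⟩⟩ =
            sn' j' ≫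
              b ⟨j'.1, ⟨j'.2.1 ≫ i'.2.1, ⟨i'.1, j'.2.1, i'.2.1, i'.2.2, j'.2.2, rfl⟩⟩⟩ := by
          refine matching_compat Dbind b hb
            ⟨j.1, ⟨j.2.1 ≫ i.2.1, ⟨i.1, j.2.1, i.2.1, i.2.2, j.2.2, rfl⟩⟩⟩
            ⟨j'.1, ⟨j'.2.1 ≫ i'.2.1, ⟨i'.1, j'.2.1, i'.2.1, i'.2.2, j'.2.2, rfl⟩⟩⟩ _ _ ?_
          show (rn' j' ≫ sn j) ≫ (j.2.1 ≫ i.2.1) = sn' j' ≫ (j'.2.1 ≫ i'.2.1)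
          simp only [Category.assoc]
          rw [← w1', wD, w2']
        calc rn' j' ≫ rn j ≫ DR.p₁ i i' ≫ c i
            = rn' j' ≫ sn j ≫ j.2.1 ≫ c i := by rw [w1']
          _ = rn' j' ≫ sn j ≫
              b ⟨j.1, ⟨j.2.1 ≫ i.2.1, ⟨i.1, j.2.1, i.2.1, i.2.2, j.2.2, rfl⟩⟩⟩ := by rw [hci]
          _ = (rn' j' ≫ sn j) ≫
              b ⟨j.1, ⟨j.2.1 ≫ i.2.1, ⟨i.1, j.2.1, i.2.1, i.2.2, j.2.2, rfl⟩⟩⟩ := by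
              rw [Category.assoc]
          _ = sn' j' ≫
              b ⟨j'.1, ⟨j'.2.1 ≫ i'.2.1, ⟨i'.1, j'.2.1, i'.2.1, i'.2.2, j'.2.2, rfl⟩⟩⟩ := hmain
          _ = sn' j' ≫ j'.2.1 ≫ c i' := by rw [hci']
          _ = (sn' j' ≫ j'.2.1) ≫ c i' := by rw [Category.assoc]
          _ = (rn' j' ≫ rn j ≫ DR.p₂ i i') ≫ c i' := by rw [w2]
          _ = rn' j' ≫ rn j ≫ DR.p₂ i i' ≫ c i' := by simp only [Category.assoc]
      obtain ⟨t, ht, htu⟩ := hXcol.desc c hccompat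
      refine ⟨t, ?_, ?_⟩
      · rintro ⟨Z, k, hk⟩
        obtain ⟨Y, g, h, hRh, hTg, rfl⟩ := hk
        have h2 : h ≫ t = c ⟨Y, ⟨h, hRh⟩⟩ := ht ⟨Y, ⟨h, hRh⟩⟩
        show (g ≫ h) ≫ t = _
        rw [Category.assoc, h2]
        exact hc ⟨Y, ⟨h, hRh⟩⟩ ⟨Z, ⟨g, hTg⟩⟩
      · intro t' ht'
        refine htu t' (fun i => ?_)
        obtain ⟨Y, h, hRh⟩ := i
        refine hcu ⟨Y, ⟨h, hRh⟩⟩ (h ≫ t') (fun j => ?_)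
        obtain ⟨Z, g, hTg⟩ := j
        have := ht' ⟨Z, ⟨g ≫ h, ⟨Y, g, h, hRh, hTg, rfl⟩⟩⟩
        exact (Category.assoc g h t').symm.trans this
end

section
/- Let (C, M) be a small M-category satisfying conditions (G1)–(G3), and let J be the Grothendieck topology on C generated by the basis whose covers of C are the families {a_i : C_i → C}_{i∈I} with a_i ∈ M and ⋁_{i∈I} a_i = 1 in Sub_M(C). Then J is subcanonical: every representable presheaf y(D) : Cᵒᵖ → Set is a J-sheaf. -/
open CategoryTheory Limits Opposite

universe w v u

namespace JRC

open CategoryTheory Limits Opposite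

variable {C : Type u} [SmallCategory C]

/-- The Grothendieck topology on a small geometric `M`-category generated by the basis of
`M`-covers: the smallest Grothendieck topology in which every `M`-cover generates a
covering sieve.  (When `(C, M)` is geometric the `M`-covers form a basis, and a sieve is
then a covering sieve for this topology iff it contains an `M`-cover.) -/
def mTopology (S : StableSystem C) (_hgeo : S.Geometric) : GrothendieckTopology C :=
  sInf {J : GrothendieckTopology C |
    ∀ (X : C) (R : Presieve X), IsMCover S X R → Sieve.generate R ∈ J X}

end JRC

namespace JRC

open CategoryTheory Limits Opposite

section Aux

variable {C : Type u} [SmallCategory C]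

/-- Choose matching data for a family of maps in `M`, using stability of `M` under pullback. -/
noncomputable def mkData (S : StableSystem C) {ι : Type*} {A : ι → C} {X : C}
    (m : ∀ i, A i ⟶ X) (hM : ∀ i, S.M (m i)) : MatchingData m := by
  have h : ∀ i j, ∃ (P : C) (p : P ⟶ A i) (q : P ⟶ A j), IsPullback p q (m i) (m j) := by
    intro i j
    obtain ⟨P, p, q, _, hpb⟩ := S.pullback (m i) (m j) (hM j)
    exact ⟨P, p, q, hpb⟩
  choose P p q hpb using h
  exact ⟨P, p, q, hpb⟩

/-- The matching-colimit property is invariant under reindexing of the family. -/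
theorem reindex {ι : Type*} {ι' : Type*} {A : ι → C} {X : C} {m : ∀ i, A i ⟶ X}
    {A' : ι' → C} {m' : ∀ j, A' j ⟶ X}
    (φ : ι' → ι) (eo : ∀ j, A' j = A (φ j)) (em : ∀ j, m' j = eqToHom (eo j) ≫ m (φ j))
    (sec : ι → ι') (hA : ∀ i, A' (sec i) = A i) (hm : ∀ i, m' (sec i) = eqToHom (hA i) ≫ m i)
    {U : C} {a : ∀ i, A i ⟶ U}
    (a' : ∀ j, A' j ⟶ U) (ha' : ∀ j, a' j = eqToHom (eo j) ≫ a (φ j))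
    (hasec : ∀ i, a' (sec i) = eqToHom (hA i) ≫ a i)
    (D : MatchingData m) (hD : IsMatchingColimit D U a)
    (D' : MatchingData m') : IsMatchingColimit D' U a' := by
  -- a "well-definedness" helper: matching families are compatible with identifications of indices
  have wd : ∀ (j k : ι') {B : C} (b' : ∀ l, A' l ⟶ B),
      (∀ l l', D'.p₁ l l' ≫ b' l = D'.p₂ l l' ≫ b' l') →
      ∀ (h2 : A' j = A' k), m' j = eqToHom h2 ≫ m' k → b' j = eqToHom h2 ≫ b' k := by
    intro j k B b' hb' h2 hmm
    have hlift : (𝟙 (A' j)) ≫ m' j = eqToHom h2 ≫ m' k := by simpa using hmm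
    set d := (D'.isPB j k).lift (𝟙 _) (eqToHom h2) hlift with hd
    have h1 : d ≫ D'.p₁ j k = 𝟙 _ := (D'.isPB j k).lift_fst _ _ _
    have h2' : d ≫ D'.p₂ j k = eqToHom h2 := (D'.isPB j k).lift_snd _ _ _
    calc b' j = (d ≫ D'.p₁ j k) ≫ b' j := by rw [h1, Category.id_comp]
      _ = d ≫ D'.p₁ j k ≫ b' j := by rw [Category.assoc]
      _ = d ≫ D'.p₂ j k ≫ b' k := by rw [hb' j k]
      _ = (d ≫ D'.p₂ j k) ≫ b' k := by rw [Category.assoc]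
      _ = eqToHom h2 ≫ b' k := by rw [h2']
  constructor
  · intro j k
    have hlift : (D'.p₁ j k ≫ eqToHom (eo j)) ≫ m (φ j)
        = (D'.p₂ j k ≫ eqToHom (eo k)) ≫ m (φ k) := by
      have := (D'.isPB j k).w
      rw [em j, em k] at this
      simpa using this
    set ψ := (D.isPB (φ j) (φ k)).lift _ _ hlift with hψ
    have h1 : ψ ≫ D.p₁ (φ j) (φ k) = D'.p₁ j k ≫ eqToHom (eo j) :=
      (D.isPB (φ j) (φ k)).lift_fst _ _ _
    have h2 : ψ ≫ D.p₂ (φ j) (φ k) = D'.p₂ j k ≫ eqToHom (eo k) :=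
      (D.isPB (φ j) (φ k)).lift_snd _ _ _
    calc D'.p₁ j k ≫ a' j = (D'.p₁ j k ≫ eqToHom (eo j)) ≫ a (φ j) := by
          rw [ha' j, Category.assoc]
      _ = ψ ≫ D.p₁ (φ j) (φ k) ≫ a (φ j) := by rw [← h1, Category.assoc]
      _ = ψ ≫ D.p₂ (φ j) (φ k) ≫ a (φ k) := by rw [hD.w (φ j) (φ k)]
      _ = (D'.p₂ j k ≫ eqToHom (eo k)) ≫ a (φ k) := by rw [← Category.assoc, h2]
      _ = D'.p₂ j k ≫ a' k := by rw [ha' k, Category.assoc]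
  · intro B b' hb'
    -- transport the family along the section
    set b : ∀ i, A i ⟶ B := fun i => eqToHom (hA i).symm ≫ b' (sec i) with hb
    have hmatch : ∀ i j, D.p₁ i j ≫ b i = D.p₂ i j ≫ b j := by
      intro i j
      have hlift : (D.p₁ i j ≫ eqToHom (hA i).symm) ≫ m' (sec i)
          = (D.p₂ i j ≫ eqToHom (hA j).symm) ≫ m' (sec j) := by
        rw [hm i, hm j]
        simpa using (D.isPB i j).w
      set χ := (D'.isPB (sec i) (sec j)).lift _ _ hlift with hχ
      have h1 : χ ≫ D'.p₁ (sec i) (sec j) = D.p₁ i j ≫ eqToHom (hA i).symm :=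
        (D'.isPB (sec i) (sec j)).lift_fst _ _ _
      have h2 : χ ≫ D'.p₂ (sec i) (sec j) = D.p₂ i j ≫ eqToHom (hA j).symm :=
        (D'.isPB (sec i) (sec j)).lift_snd _ _ _
      calc D.p₁ i j ≫ b i = (D.p₁ i j ≫ eqToHom (hA i).symm) ≫ b' (sec i) := by
            rw [hb]; simp
        _ = χ ≫ D'.p₁ (sec i) (sec j) ≫ b' (sec i) := by rw [← h1, Category.assoc]
        _ = χ ≫ D'.p₂ (sec i) (sec j) ≫ b' (sec j) := by rw [hb' (sec i) (sec j)]
        _ = (D.p₂ i j ≫ eqToHom (hA j).symm) ≫ b' (sec j) := by rw [← Category.assoc, h2]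
        _ = D.p₂ i j ≫ b j := by rw [hb]; simp
    obtain ⟨t, ht, hu⟩ := hD.desc b hmatch
    refine ⟨t, ?_, ?_⟩
    · intro j
      have key : b' j = eqToHom ((eo j).trans (hA (φ j)).symm) ≫ b' (sec (φ j)) := by
        refine wd j (sec (φ j)) b' hb' _ ?_
        rw [em j, hm (φ j)]
        simp [eqToHom_trans_assoc]
      calc a' j ≫ t = eqToHom (eo j) ≫ a (φ j) ≫ t := by rw [ha' j, Category.assoc]
        _ = eqToHom (eo j) ≫ b (φ j) := by rw [ht (φ j)]
        _ = eqToHom (eo j) ≫ eqToHom (hA (φ j)).symm ≫ b' (sec (φ j)) := by rw [hb]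
        _ = b' j := by rw [key]; simp [eqToHom_trans_assoc]
    · intro t' ht'
      refine hu t' fun i => ?_
      have hai : a i = eqToHom (hA i).symm ≫ a' (sec i) := by
        rw [hasec i]; simp
      calc a i ≫ t' = eqToHom (hA i).symm ≫ a' (sec i) ≫ t' := by
            rw [hai, Category.assoc]
        _ = eqToHom (hA i).symm ≫ b' (sec i) := by rw [ht' (sec i)]
        _ = b i := by rw [hb]

/-- Representable presheaves satisfy the sheaf condition for `M`-covers. -/
theorem isSheafFor_yoneda_of_isMCover (S : StableSystem C) {X : C} {R : Presieve X}
    (hR : IsMCover S X R) (E : C) : Presieve.IsSheafFor (yoneda.obj E) R := by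
  intro x hx
  let m : ∀ p : (Σ Z : C, {g : Z ⟶ X // R g}), p.1 ⟶ X := fun p => p.2.1
  have hM : ∀ p, S.M (m p) := fun p => hR.1 _ p.2.2
  let D := mkData S m hM
  have hcol := hR.2 D
  have comp : ∀ i j, D.p₁ i j ≫ x (m i) i.2.2 = D.p₂ i j ≫ x (m j) j.2.2 := by
    intro i j
    exact hx (D.p₁ i j) (D.p₂ i j) i.2.2 j.2.2 (D.isPB i j).w
  obtain ⟨t, ht, hu⟩ := hcol.desc (fun i => x (m i) i.2.2) comp
  refine ⟨t, ?_, ?_⟩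
  · intro Z g hg
    exact ht ⟨Z, g, hg⟩
  · intro t' ht'
    exact hu t' fun i => ht' (m i) i.2.2

/-- `M`-covers are jointly epimorphic. -/
theorem jointly_epic (S : StableSystem C) {X : C} {R : Presieve X} (hR : IsMCover S X R)
    {E : C} {t₁ t₂ : X ⟶ E} (h : ∀ (Z : C) (g : Z ⟶ X), R g → g ≫ t₁ = g ≫ t₂) :
    t₁ = t₂ := by
  let m : ∀ p : (Σ Z : C, {g : Z ⟶ X // R g}), p.1 ⟶ X := fun p => p.2.1
  have hM : ∀ p, S.M (m p) := fun p => hR.1 _ p.2.2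
  let D := mkData S m hM
  have hcol := hR.2 D
  obtain ⟨t, _, hu⟩ := hcol.desc (fun i => m i ≫ t₁) (fun i j => by
    rw [← Category.assoc, ← Category.assoc, (D.isPB i j).w])
  have h₁ : t₁ = t := hu t₁ fun i => rfl
  have h₂ : t₂ = t := hu t₂ fun i => (h _ _ i.2.2).symm
  rw [h₁, h₂]

/-- `M`-covers pull back to `M`-covers (up to refining the generated sieve). -/
theorem mcover_pullback (S : StableSystem C) (hgeo : S.Geometric) {X : C} {R : Presieve X}
    (hR : IsMCover S X R) {Y : C} (f : Y ⟶ X) :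
    ∃ R' : Presieve Y, IsMCover S Y R' ∧ Sieve.generate R' ≤ (Sieve.generate R).pullback f := by
  classical
  let ι := Σ Z : C, {g : Z ⟶ X // R g}
  let A : ι → C := fun p => p.1
  let m : ∀ p : ι, A p ⟶ X := fun p => p.2.1
  have hM : ∀ p, S.M (m p) := fun p => hR.1 _ p.2.2
  let D := mkData S m hM
  obtain ⟨U, a, μ, hcolU, haμ, hMμ, hstab⟩ := hgeo m hM D
  have hX := hR.2 D
  -- μ is an isomorphism
  obtain ⟨ν, hν, _⟩ := hX.desc a hcolU.w
  have hμν : μ ≫ ν = 𝟙 U := by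
    obtain ⟨s, _, hsu⟩ := hcolU.desc a hcolU.w
    have e1 : μ ≫ ν = s := hsu _ fun i => by
      rw [← Category.assoc, haμ i, hν i]
    have e2 : 𝟙 U = s := hsu _ fun i => by simp
    rw [e1, e2]
  have hνμ : ν ≫ μ = 𝟙 X := by
    obtain ⟨s, _, hsu⟩ := hX.desc m hX.w
    have e1 : ν ≫ μ = s := hsu _ fun i => by
      rw [← Category.assoc, hν i, haμ i]
    have e2 : 𝟙 X = s := hsu _ fun i => by simp; rfl
    rw [e1, e2]
  haveI : IsIso μ := ⟨ν, hμν, hνμ⟩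
  -- pull the family back along f
  have hpb : ∀ i : ι, ∃ (P : C) (p : P ⟶ Y) (q : P ⟶ A i),
      S.M p ∧ IsPullback p q f (m i) := fun i => S.pullback f (m i) (hM i)
  choose A' m' q hM' hpb' using hpb
  have hr : IsPullback (𝟙 Y) (f ≫ inv μ) f μ :=
    IsPullback.of_horiz_isIso ⟨by simp⟩
  have ha' : ∀ i, m' i ≫ (f ≫ inv μ) = q i ≫ a i := by
    intro i
    rw [← Category.assoc, (hpb' i).w, Category.assoc]
    have : m i ≫ inv μ = a i := by
      rw [← haμ i, Category.assoc, IsIso.hom_inv_id, Category.comp_id]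
    rw [this]
  let D' := mkData S m' hM'
  have hYcol : ∀ D'' : MatchingData m', IsMatchingColimit D'' Y m' :=
    hstab f m' q hpb' (𝟙 Y) (f ≫ inv μ) hr m' (fun i => Category.comp_id _) ha'
  -- the pulled-back presieve
  refine ⟨fun Z g => ∃ i : ι, ∃ h : Z = A' i, g = eqToHom h ≫ m' i, ⟨?_, ?_⟩, ?_⟩
  · rintro Z g ⟨i, h, rfl⟩
    exact S.comp _ _ (S.iso _ inferInstance) (hM' i)
  · intro D''
    let φ : (Σ Z : C, {g : Z ⟶ Y // ∃ i : ι, ∃ h : Z = A' i, g = eqToHom h ≫ m' i}) → ι :=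
      fun p => p.2.2.choose
    have eo : ∀ p, p.1 = A' (φ p) := fun p => p.2.2.choose_spec.choose
    have em : ∀ p, p.2.1 = eqToHom (eo p) ≫ m' (φ p) :=
      fun p => p.2.2.choose_spec.choose_spec
    let sec : ι → (Σ Z : C, {g : Z ⟶ Y // ∃ i : ι, ∃ h : Z = A' i, g = eqToHom h ≫ m' i}) :=
      fun i => ⟨A' i, m' i, ⟨i, rfl, by simp⟩⟩
    have hA : ∀ i, (sec i).1 = A' i := fun i => rfl
    have hm : ∀ i, (sec i).2.1 = eqToHom (hA i) ≫ m' i := fun i => by simp [sec]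
    exact reindex φ eo em sec hA hm (fun p => p.2.1) em hm D' (hYcol D') D''
  · rintro Z g ⟨W, h, g', ⟨i, e, rfl⟩, rfl⟩
    refine ⟨A i, h ≫ eqToHom e ≫ q i, m i, i.2.2, ?_⟩
    simp only [Category.assoc]
    rw [← (hpb' i).w]

/-- The sieve generated by an `M`-cover belongs to the canonical topology. -/
theorem generate_mem_canonical (S : StableSystem C) (hgeo : S.Geometric) {X : C}
    {R : Presieve X} (hR : IsMCover S X R) :
    Sieve.generate R ∈ Sheaf.canonicalTopology C X := by
  rw [Sheaf.canonicalTopology, Sheaf.finestTopology, GrothendieckTopology.mem_sInf]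
  rintro t ⟨P, ⟨E, rfl⟩, rfl⟩
  intro Y f
  obtain ⟨R', hR', hle⟩ := mcover_pullback S hgeo hR f
  refine Presieve.isSheafFor_subsieve_aux (yoneda.obj E) (S := Sieve.generate R')
    (fun Z g hg => hle g hg) ((Presieve.isSheafFor_iff_generate R').mp
      (isSheafFor_yoneda_of_isMCover S hR' E)) ?_
  intro Z g _
  obtain ⟨R'', hR'', hle₂⟩ := mcover_pullback S hgeo hR' g
  intro x t₁ t₂ h₁ h₂
  refine jointly_epic S hR'' fun W k hk => ?_
  have hk' : ((Sieve.generate R').pullback g) k := hle₂ k (Sieve.le_generate R'' W k hk)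
  exact (h₁ k hk').trans (h₂ k hk').symm

end Aux

end JRC

open JRC CategoryTheory in
/-- The topology generated by the `M`-covers on a small geometric `M`-category is
subcanonical: every representable presheaf is a sheaf. -/
theorem stmt_7 {C : Type u} [SmallCategory C] (S : StableSystem C) (hgeo : S.Geometric)
    (D : C) : Presieve.IsSheaf (mTopology S hgeo) (yoneda.obj D) := by
  have hle : mTopology S hgeo ≤ Sheaf.canonicalTopology C :=
    sInf_le fun X R hR => generate_mem_canonical S hgeo hR
  exact Presieve.isSheaf_of_le _ hle (Sheaf.isSheaf_yoneda_obj D)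
end

section
/- Let (C, M) be a small M-category satisfying conditions (G1)–(G3), and let J be the Grothendieck topology on C generated by the basis whose covers of C are the families {a_i : C_i → C}_{i∈I} with a_i ∈ M and ⋁_{i∈I} a_i = 1 in Sub_M(C). Then the presheaf Σ : Cᵒᵖ → Set sending an object C to the set Sub_M(C) of M-subobjects of C, and a morphism f : D → C to the pullback map f* : Sub_M(C) → Sub_M(D), is a J-sheaf. -/
open CategoryTheory Limits Opposite

universe w v u

namespace JRC

open CategoryTheory Limits Opposite

variable {C : Type u} [Category.{v} C]

/-- A chosen pullback of an `M`-subobject along a map. -/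
noncomputable def pbMSub (S : StableSystem C) {X D : C} (f : D ⟶ X) (n : MSub S X) :
    MSub S D :=
  ⟨(S.pullback f n.m n.hm).choose,
   (S.pullback f n.m n.hm).choose_spec.choose,
   (S.pullback f n.m n.hm).choose_spec.choose_spec.choose_spec.1⟩

/-- The second projection of the chosen pullback. -/
noncomputable def pbMSubSnd (S : StableSystem C) {X D : C} (f : D ⟶ X) (n : MSub S X) :
    (pbMSub S f n).dom ⟶ n.dom :=
  (S.pullback f n.m n.hm).choose_spec.choose_spec.choose

lemma pbMSub_isPullback (S : StableSystem C) {X D : C} (f : D ⟶ X) (n : MSub S X) :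
    IsPullback (pbMSub S f n).m (pbMSubSnd S f n) f n.m :=
  (S.pullback f n.m n.hm).choose_spec.choose_spec.choose_spec.2

lemma pbMSub_mono (S : StableSystem C) {X D : C} (f : D ⟶ X) :
    Monotone (pbMSub S f) := by
  rintro n₁ n₂ ⟨φ, hφ⟩
  refine ⟨(pbMSub_isPullback S f n₂).lift (pbMSub S f n₁).m (pbMSubSnd S f n₁ ≫ φ) ?_,
    (pbMSub_isPullback S f n₂).lift_fst _ _ _⟩
  rw [(pbMSub_isPullback S f n₁).w, Category.assoc, hφ]

lemma pbMSub_id (S : StableSystem C) (X : C) (n : MSub S X) :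
    AntisymmRel (· ≤ ·) (pbMSub S (𝟙 X) n) n := by
  constructor
  · refine ⟨pbMSubSnd S (𝟙 X) n, ?_⟩
    have h := (pbMSub_isPullback S (𝟙 X) n).w
    rw [Category.comp_id] at h
    exact h.symm
  · refine ⟨(pbMSub_isPullback S (𝟙 X) n).lift n.m (𝟙 n.dom) (by simp), ?_⟩
    exact (pbMSub_isPullback S (𝟙 X) n).lift_fst _ _ _

lemma pbMSub_comp (S : StableSystem C) {X Y Z : C} (f : Y ⟶ X) (g : Z ⟶ Y) (n : MSub S X) :
    AntisymmRel (· ≤ ·) (pbMSub S (g ≫ f) n) (pbMSub S g (pbMSub S f n)) := by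
  have h₁ := pbMSub_isPullback S f n
  have h₂ := pbMSub_isPullback S g (pbMSub S f n)
  have hQ := pbMSub_isPullback S (g ≫ f) n
  constructor
  · -- lift into the iterated pullback
    have w₁ : ((pbMSub S (g ≫ f) n).m ≫ g) ≫ f = pbMSubSnd S (g ≫ f) n ≫ n.m := by
      rw [Category.assoc, hQ.w]
    refine ⟨h₂.lift (pbMSub S (g ≫ f) n).m
      (h₁.lift ((pbMSub S (g ≫ f) n).m ≫ g) (pbMSubSnd S (g ≫ f) n) w₁) ?_,
      h₂.lift_fst _ _ _⟩
    rw [h₁.lift_fst]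
  · -- lift the iterated pullback into the one-step pullback
    refine ⟨hQ.lift (pbMSub S g (pbMSub S f n)).m (pbMSubSnd S g (pbMSub S f n) ≫ pbMSubSnd S f n) ?_,
      hQ.lift_fst _ _ _⟩
    rw [← Category.assoc, h₂.w, Category.assoc, h₁.w, Category.assoc]

/-- The presheaf of `M`-subobjects: `X ↦ Sub_M(X)`, with action by pullback. -/
noncomputable def subMFunctor (S : StableSystem C) : Cᵒᵖ ⥤ Type max u v where
  obj X := SubM S X.unop
  map {X Y} f := TypeCat.ofHom (Quotient.map (sa := AntisymmRel.setoid (MSub S X.unop) (· ≤ ·))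
    (sb := AntisymmRel.setoid (MSub S Y.unop) (· ≤ ·)) (pbMSub S f.unop)
    (fun a b hab => ⟨pbMSub_mono S f.unop hab.1, pbMSub_mono S f.unop hab.2⟩))
  map_id X := by
    ext x
    induction x using Quotient.ind with
    | _ n => exact Quotient.sound (pbMSub_id S X.unop n)
  map_comp {X Y Z} f g := by
    ext x
    induction x using Quotient.ind with
    | _ n => exact Quotient.sound (pbMSub_comp S f.unop g.unop n)

end JRC

namespace JRC

open CategoryTheory Limits

section AuxProof

variable {C : Type u} [Category.{v} C]

/-- A chosen matching data for any family of `M`-maps. -/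
noncomputable def chosenMD (S : StableSystem C) {ι : Type w} {A : ι → C} {X : C}
    (m : ∀ i, A i ⟶ X) (hm : ∀ i, S.M (m i)) : MatchingData m where
  P i j := (S.pullback (m i) (m j) (hm j)).choose
  p₁ i j := (S.pullback (m i) (m j) (hm j)).choose_spec.choose
  p₂ i j := (S.pullback (m i) (m j) (hm j)).choose_spec.choose_spec.choose
  isPB i j := (S.pullback (m i) (m j) (hm j)).choose_spec.choose_spec.choose_spec.2

/-- If a family of `M`-maps into `X` has `X` itself as matching colimit, then any
family of pullbacks of it along `f : B ⟶ X` has `B` as matching colimit. -/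
lemma cover_colimit_stable (S : StableSystem C)
    (hgeo : S.Geometric) {ι : Type (max u v)} {A : ι → C} {X : C}
    {m : ∀ i, A i ⟶ X} (hm : ∀ i, S.M (m i))
    (hX : ∀ D : MatchingData m, IsMatchingColimit D X m)
    {B : C} (f : B ⟶ X) {A' : ι → C} (m' : ∀ i, A' i ⟶ B) (q : ∀ i, A' i ⟶ A i)
    (hPB : ∀ i, IsPullback (m' i) (q i) f (m i)) (D' : MatchingData m') :
    IsMatchingColimit D' B m' := by
  obtain ⟨U, a, μ, hcolU, haμ, hμM, hstab⟩ := hgeo m hm (chosenMD S m hm)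
  have hXcol := hX (chosenMD S m hm)
  obtain ⟨σ, hσ, -⟩ := hXcol.desc a hcolU.w
  have hμσ : μ ≫ σ = 𝟙 U := by
    obtain ⟨t, ht, hu⟩ := hcolU.desc a hcolU.w
    rw [hu (μ ≫ σ) (fun i => by rw [← Category.assoc, haμ i, hσ i]),
        hu (𝟙 U) (fun i => Category.comp_id _)]
  have hσμ : σ ≫ μ = 𝟙 X := by
    obtain ⟨t, ht, hu⟩ := hXcol.desc m hXcol.w
    rw [hu (σ ≫ μ) (fun i => by rw [← Category.assoc, hσ i, haμ i]),
        hu (𝟙 X) (fun i => Category.comp_id _)]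
  have : IsIso μ := ⟨σ, hμσ, hσμ⟩
  have hpb : IsPullback (𝟙 B) (f ≫ inv μ) f μ :=
    IsPullback.of_horiz_isIso ⟨by simp⟩
  exact hstab f m' q hPB (𝟙 B) (f ≫ inv μ) hpb m'
    (fun i => Category.comp_id _)
    (fun i => by rw [← Category.assoc, (hPB i).w, ← haμ i]; simp)
    D'

end AuxProof

section MainProof

variable {C : Type u} [SmallCategory C]

/-- The `M`-subobject presheaf computed on classes. -/
lemma subMFunctor_map_cls (S : StableSystem C) {Z Z' : C} (g : Z' ⟶ Z) (u : MSub S Z) :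
    (subMFunctor S).map g.op u.cls = (pbMSub S g u).cls := rfl

theorem isSheafFor_mcover_pullback (S : StableSystem C)
    (hgeo : S.Geometric) {X : C} {R : Presieve X} (hR : IsMCover S X R)
    {Y : C} (f : Y ⟶ X) :
    Presieve.IsSheafFor (subMFunctor S) (((Sieve.generate R).pullback f) : Presieve Y) := by
  classical
  set m : ∀ p : (Σ Z : C, {g : Z ⟶ X // R g}), p.1 ⟶ X := fun p => p.2.1 with hmdef
  have hm : ∀ p, S.M (m p) := fun p => hR.1 _ p.2.2
  set AA : ∀ p : (Σ Z : C, {g : Z ⟶ X // R g}), MSub S Y :=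
    fun p => pbMSub S f ⟨p.1, m p, hm p⟩ with hAAdef
  set a' : ∀ p : (Σ Z : C, {g : Z ⟶ X // R g}), (AA p).dom ⟶ Y :=
    fun p => (AA p).m with ha'def
  set q : ∀ p : (Σ Z : C, {g : Z ⟶ X // R g}), (AA p).dom ⟶ p.1 :=
    fun p => pbMSubSnd S f ⟨p.1, m p, hm p⟩ with hqdef
  have hPB : ∀ p, IsPullback (a' p) (q p) f (m p) := fun p => pbMSub_isPullback S f _
  have ha'M : ∀ p, S.M (a' p) := fun p => (AA p).hm
  have hT : ∀ p, ((Sieve.generate R).pullback f) (a' p) := fun p =>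
    ⟨p.1, q p, m p, p.2.2, (hPB p).w.symm⟩
  -- Separation: two M-subobjects of Y with the same pullbacks along all `a' p` coincide.
  have hsep : ∀ u v : MSub S Y,
      (∀ p, (pbMSub S (a' p) u).cls = (pbMSub S (a' p) v).cls) → u ≤ v := by
    intro u v h
    set G : ∀ p : (Σ Z : C, {g : Z ⟶ X // R g}), MSub S u.dom :=
      fun p => pbMSub S u.m (AA p) with hGdef
    set d : ∀ p : (Σ Z : C, {g : Z ⟶ X // R g}), (G p).dom ⟶ u.dom :=
      fun p => (G p).m with hddef
    set s : ∀ p : (Σ Z : C, {g : Z ⟶ X // R g}), (G p).dom ⟶ (AA p).dom :=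
      fun p => pbMSubSnd S u.m (AA p) with hsdef
    have hGpb : ∀ p, IsPullback (d p) (s p) u.m (a' p) := fun p => pbMSub_isPullback S u.m _
    have hbig : ∀ p, IsPullback (d p) (s p ≫ q p) (u.m ≫ f) (m p) :=
      fun p => (hGpb p).paste_vert (hPB p)
    have hDcol : ∀ D : MatchingData d, IsMatchingColimit D u.dom d := fun D =>
      cover_colimit_stable S hgeo hm hR.2 (u.m ≫ f) d (fun p => s p ≫ q p) hbig D
    have hU : ∀ p, IsPullback (pbMSub S (a' p) u).m (pbMSubSnd S (a' p) u) (a' p) u.m :=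
      fun p => pbMSub_isPullback S (a' p) u
    have hV : ∀ p, IsPullback (pbMSub S (a' p) v).m (pbMSubSnd S (a' p) v) (a' p) v.m :=
      fun p => pbMSub_isPullback S (a' p) v
    have hle : ∀ p, pbMSub S (a' p) u ≤ pbMSub S (a' p) v := fun p => (Quotient.exact (h p)).1
    set l : ∀ p, (G p).dom ⟶ (pbMSub S (a' p) u).dom :=
      fun p => (hU p).lift (s p) (d p) (hGpb p).w.symm with hldef
    have hl1 : ∀ p, l p ≫ (pbMSub S (a' p) u).m = s p := fun p => (hU p).lift_fst _ _ _
    have hl2 : ∀ p, l p ≫ pbMSubSnd S (a' p) u = d p := fun p => (hU p).lift_snd _ _ _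
    set φ : ∀ p, (pbMSub S (a' p) u).dom ⟶ (pbMSub S (a' p) v).dom :=
      fun p => (hle p).choose with hφdef
    have hφ : ∀ p, φ p ≫ (pbMSub S (a' p) v).m = (pbMSub S (a' p) u).m :=
      fun p => (hle p).choose_spec
    set r : ∀ p, (G p).dom ⟶ v.dom := fun p => l p ≫ φ p ≫ pbMSubSnd S (a' p) v with hrdef
    have hrv : ∀ p, r p ≫ v.m = d p ≫ u.m := by
      intro p
      show (l p ≫ φ p ≫ pbMSubSnd S (a' p) v) ≫ v.m = d p ≫ u.m
      simp only [Category.assoc]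
      rw [← (hV p).w]
      slice_lhs 2 3 => rw [hφ p]
      slice_lhs 2 3 => rw [(hU p).w]
      slice_lhs 1 2 => rw [hl2 p]
    have hdM : ∀ p, S.M (d p) := fun p => (G p).hm
    set D0 : MatchingData d := chosenMD S d hdM with hD0def
    haveI : Mono v.m := S.mono _ v.hm
    have hcol := hDcol D0
    obtain ⟨ρ, hρ, -⟩ := hcol.desc r (fun p p' => by
      rw [← cancel_mono v.m]
      simp only [Category.assoc]
      rw [hrv p, hrv p', ← Category.assoc, ← Category.assoc, (D0.isPB p p').w])
    obtain ⟨t0, ht0, hu0⟩ := hcol.desc (fun p => d p ≫ u.m) (fun p p' => by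
      rw [← Category.assoc, ← Category.assoc, (D0.isPB p p').w])
    refine ⟨ρ, ?_⟩
    rw [hu0 (ρ ≫ v.m) (fun p => by rw [← Category.assoc, hρ p, hrv p]),
        hu0 u.m (fun p => rfl)]
  -- Main part
  intro x hx
  have hsc := hx.to_sieveCompatible
  set n : ∀ p : (Σ Z : C, {g : Z ⟶ X // R g}), MSub S (AA p).dom :=
    fun p => (x (a' p) (hT p)).out with hndef
  have hn : ∀ p, (n p).cls = x (a' p) (hT p) := fun p => Quotient.out_eq _
  set b : ∀ p : (Σ Z : C, {g : Z ⟶ X // R g}), MSub S Y :=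
    fun p => ⟨(n p).dom, (n p).m ≫ a' p, S.comp _ _ (n p).hm (ha'M p)⟩ with hbdef
  obtain ⟨V, vmap, ν, hVcol, hvν, hνM, hVstab⟩ :=
    hgeo (fun p => (b p).m) (fun p => (b p).hm) (chosenMD S _ (fun p => (b p).hm))
  have key : ∀ p, (subMFunctor S).map (a' p).op ((⟨V, ν, hνM⟩ : MSub S Y).cls)
      = x (a' p) (hT p) := by
    intro j
    set W : ∀ p : (Σ Z : C, {g : Z ⟶ X // R g}), MSub S (AA j).dom :=
      fun p => pbMSub S (a' j) (AA p) with hWdef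
    set w1 : ∀ p, (W p).dom ⟶ (AA j).dom := fun p => (W p).m with hw1def
    set w2 : ∀ p, (W p).dom ⟶ (AA p).dom := fun p => pbMSubSnd S (a' j) (AA p) with hw2def
    have hW : ∀ p, IsPullback (w1 p) (w2 p) (a' j) (a' p) :=
      fun p => pbMSub_isPullback S (a' j) (AA p)
    set E : ∀ p, MSub S (W p).dom := fun p => pbMSub S (w2 p) (n p) with hEdef
    set e1 : ∀ p, (E p).dom ⟶ (W p).dom := fun p => (E p).m with he1def
    set e2 : ∀ p, (E p).dom ⟶ (n p).dom := fun p => pbMSubSnd S (w2 p) (n p) with he2def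
    have hE : ∀ p, IsPullback (e1 p) (e2 p) (w2 p) (n p).m :=
      fun p => pbMSub_isPullback S (w2 p) (n p)
    set m'' : ∀ p, (E p).dom ⟶ (AA j).dom := fun p => e1 p ≫ w1 p with hm''def
    have hm''M : ∀ p, S.M (m'' p) := fun p => S.comp _ _ (E p).hm (W p).hm
    have hPB'' : ∀ p, IsPullback (m'' p) (e2 p) (a' j) ((b p).m) :=
      fun p => (hE p).paste_horiz (hW p)
    set VJ : MSub S (AA j).dom := pbMSub S (a' j) ⟨V, ν, hνM⟩ with hVJdef
    set rr : VJ.dom ⟶ V := pbMSubSnd S (a' j) (⟨V, ν, hνM⟩ : MSub S Y) with hrrdef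
    have hVJ : IsPullback VJ.m rr (a' j) ν := pbMSub_isPullback S (a' j) _
    set a'' : ∀ p, (E p).dom ⟶ VJ.dom := fun p =>
      hVJ.lift (m'' p) (e2 p ≫ vmap p)
        (by rw [(hPB'' p).w, Category.assoc, hvν p]) with ha''def
    have ha''1 : ∀ p, a'' p ≫ VJ.m = m'' p := fun p => hVJ.lift_fst _ _ _
    have ha''2 : ∀ p, a'' p ≫ rr = e2 p ≫ vmap p := fun p => hVJ.lift_snd _ _ _
    set D'' : MatchingData m'' := chosenMD S m'' hm''M with hD''def
    have hcol'' : IsMatchingColimit D'' VJ.dom a'' :=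
      hVstab (a' j) m'' e2 hPB'' VJ.m rr hVJ a'' ha''1 ha''2 D''
    -- (i) : n j ≤ VJ
    haveI : Mono (a' j) := S.mono _ (ha'M j)
    have hw12 : w1 j = w2 j := (cancel_mono (a' j)).1 (hW j).w
    set ℓ : (AA j).dom ⟶ (W j).dom := (hW j).lift (𝟙 _) (𝟙 _) rfl with hℓdef
    have hℓ1 : ℓ ≫ w1 j = 𝟙 _ := (hW j).lift_fst _ _ _
    have hℓ2 : ℓ ≫ w2 j = 𝟙 _ := (hW j).lift_snd _ _ _
    set k : (n j).dom ⟶ (E j).dom := (hE j).lift ((n j).m ≫ ℓ) (𝟙 _)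
      (by rw [Category.assoc, hℓ2, Category.comp_id, Category.id_comp]) with hkdef
    have hk1 : k ≫ e1 j = (n j).m ≫ ℓ := (hE j).lift_fst _ _ _
    have hnle : n j ≤ VJ := by
      refine ⟨k ≫ a'' j, ?_⟩
      rw [Category.assoc, ha''1 j]
      show k ≫ (e1 j ≫ w1 j) = (n j).m
      rw [← Category.assoc, hk1, Category.assoc, hℓ1, Category.comp_id]
    -- (ii) : VJ ≤ n j
    have hVle : VJ ≤ n j := by
      have hcompat : ∀ p, (pbMSub S (w1 p) (n j)).cls = (pbMSub S (w2 p) (n p)).cls := by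
        intro p
        have h0 := hx (w1 p) (w2 p) (hT j) (hT p) (hW p).w
        rw [← hn j, ← hn p] at h0
        exact h0
      have hF : ∀ p, IsPullback (pbMSub S (w1 p) (n j)).m (pbMSubSnd S (w1 p) (n j))
          (w1 p) (n j).m := fun p => pbMSub_isPullback S (w1 p) (n j)
      have hle2 : ∀ p, E p ≤ pbMSub S (w1 p) (n j) := fun p =>
        (Quotient.exact (hcompat p).symm).1
      set φ' : ∀ p, (E p).dom ⟶ (pbMSub S (w1 p) (n j)).dom :=
        fun p => (hle2 p).choose with hφ'def
      have hφ' : ∀ p, φ' p ≫ (pbMSub S (w1 p) (n j)).m = e1 p := fun p => (hle2 p).choose_spec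
      set c : ∀ p, (E p).dom ⟶ (n j).dom :=
        fun p => φ' p ≫ pbMSubSnd S (w1 p) (n j) with hcdef
      have hc : ∀ p, c p ≫ (n j).m = m'' p := by
        intro p
        show (φ' p ≫ pbMSubSnd S (w1 p) (n j)) ≫ (n j).m = e1 p ≫ w1 p
        rw [Category.assoc, ← (hF p).w, ← Category.assoc, hφ' p]
      haveI : Mono (n j).m := S.mono _ (n j).hm
      obtain ⟨ψ, hψ, -⟩ := hcol''.desc c (fun p p' => by
        rw [← cancel_mono (n j).m]
        simp only [Category.assoc]
        rw [hc p, hc p']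
        exact (D''.isPB p p').w)
      obtain ⟨t0, ht0, hu0⟩ := hcol''.desc m'' (fun p p' => (D''.isPB p p').w)
      refine ⟨ψ, ?_⟩
      rw [hu0 (ψ ≫ (n j).m) (fun p => by rw [← Category.assoc, hψ p, hc p]),
          hu0 VJ.m ha''1]
    rw [subMFunctor_map_cls, ← hn j]
    exact Quotient.sound ⟨hVle, hnle⟩
  refine ⟨(⟨V, ν, hνM⟩ : MSub S Y).cls, ?_, ?_⟩
  · intro Z g hg
    obtain ⟨Z', h, a₀, ha₀, hcomm⟩ := hg
    set p : (Σ Z : C, {g : Z ⟶ X // R g}) := ⟨Z', a₀, ha₀⟩ with hpdef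
    obtain ⟨k, hk⟩ : ∃ k : Z ⟶ (AA p).dom, k ≫ a' p = g :=
      ⟨(hPB p).lift g h hcomm.symm, (hPB p).lift_fst _ _ _⟩
    subst hk
    rw [op_comp, Functor.map_comp]
    change (subMFunctor S).map k.op ((subMFunctor S).map (a' p).op (⟨V, ν, hνM⟩ : MSub S Y).cls) = _
    rw [key p]
    exact (hsc (a' p) k (hT p)).symm
  · intro t' ht'
    obtain ⟨u, rfl⟩ := Quotient.exists_rep t'
    have h1 : ∀ p, (pbMSub S (a' p) u).cls = (pbMSub S (a' p) (⟨V, ν, hνM⟩ : MSub S Y)).cls := by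
      intro p
      have h2 := ht' (a' p) (hT p)
      rw [← key p] at h2
      exact h2
    exact Quotient.sound ⟨hsep u ⟨V, ν, hνM⟩ h1, hsep ⟨V, ν, hνM⟩ u (fun p => (h1 p).symm)⟩

end MainProof


end JRC

open JRC CategoryTheory in
/-- The presheaf `Σ : X ↦ Sub_M(X)` of `M`-subobjects on a small geometric `M`-category,
acting on morphisms by pullback, is a sheaf for the topology generated by the `M`-covers. -/
theorem stmt_8 {C : Type u} [SmallCategory C] (S : StableSystem C) (hgeo : S.Geometric) :
    Presieve.IsSheaf (mTopology S hgeo) (subMFunctor S) := by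
  intro X SV hSV
  have hfin : Sheaf.finestTopologySingle (subMFunctor S) ∈
      {J : GrothendieckTopology C |
        ∀ (X : C) (R : Presieve X), IsMCover S X R → Sieve.generate R ∈ J X} := by
    intro X R hR Y f
    exact isSheafFor_mcover_pullback S hgeo hR f
  have hmem : SV ∈ Sheaf.finestTopologySingle (subMFunctor S) X :=
    (GrothendieckTopology.mem_sInf _ SV).1 hSV _ hfin
  have h2 := hmem X (𝟙 X)
  rwa [Sieve.pullback_id] at h2
end

section
/- Let C be a small category equipped with a Grothendieck topology J, let D be a cocomplete category, let F : C → D be a functor, let F̃ : PSh(C) → D be the left Kan extension of F along the Yoneda embedding y : C → PSh(C), and let G : D → PSh(C) be a right adjoint of F̃. Then G(D) is a J-sheaf for every object D of D if and only if for every object C of C and every J-covering sieve S of C, the functor F̃ sends the monomorphism of presheaves i : S ↪ y(C) to an isomorphism in D. -/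
open CategoryTheory Limits Opposite

universe v' u' u

/-- Let `F̃ : PSh(C) ⥤ D` be the left Kan extension of `F : C ⥤ D` along the Yoneda
embedding, with right adjoint `G`. Then every `G(d)` is a `J`-sheaf iff `F̃` inverts the
inclusion `S ↪ y(C)` of every `J`-covering sieve. -/
theorem stmt_9 {C : Type u} [SmallCategory C] (J : GrothendieckTopology C)
    {D : Type u'} [Category.{v'} D] [HasColimits D]
    (F : C ⥤ D) (F' : (Cᵒᵖ ⥤ Type u) ⥤ D) (α : F ⟶ yoneda ⋙ F')
    [F'.IsLeftKanExtension α] (G : D ⥤ (Cᵒᵖ ⥤ Type u)) (adj : F' ⊣ G) :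
    (∀ d : D, Presieve.IsSheaf J (G.obj d)) ↔
      ∀ (X : C) (T : Sieve X), T ∈ J X → IsIso (F'.map T.functorInclusion) := by
  constructor
  · intro h X T hT
    rw [isIso_iff_coyoneda_map_bijective]
    intro d
    have hs := Presieve.isSheafFor_iff_yonedaSheafCondition.mp (h d T hT)
    constructor
    · intro g₁ g₂ hg
      have h₁ : T.functorInclusion ≫ adj.homEquiv _ _ g₁ =
          T.functorInclusion ≫ adj.homEquiv _ _ g₂ := by
        rw [← adj.homEquiv_naturality_left, ← adj.homEquiv_naturality_left]
        exact congrArg _ hg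
      obtain ⟨g, -, hu⟩ := hs (T.functorInclusion ≫ adj.homEquiv _ _ g₁)
      have := (hu _ rfl).trans (hu _ h₁.symm).symm
      exact (adj.homEquiv _ _).injective this
    · intro f
      obtain ⟨g, hg, -⟩ := hs (adj.homEquiv _ _ f)
      refine ⟨(adj.homEquiv _ _).symm g, ?_⟩
      apply (adj.homEquiv _ _).injective
      rw [adj.homEquiv_naturality_left, Equiv.apply_symm_apply, hg]
  · intro h d X T hT
    rw [Presieve.isSheafFor_iff_yonedaSheafCondition]
    intro f
    have bij := (isIso_iff_coyoneda_map_bijective (F'.map T.functorInclusion)).mp (h X T hT) d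
    obtain ⟨g, (hg : F'.map T.functorInclusion ≫ g = (adj.homEquiv _ _).symm f)⟩ :=
      bij.surjective ((adj.homEquiv _ _).symm f)
    have hu : ∀ g', F'.map T.functorInclusion ≫ g' = (adj.homEquiv _ _).symm f → g' = g :=
      fun g' hg' => bij.injective (hg'.trans hg.symm)
    refine ⟨adj.homEquiv _ _ g, ?_, ?_⟩
    · show T.functorInclusion ≫ _ = f
      rw [← adj.homEquiv_naturality_left, hg, Equiv.apply_symm_apply]
    · intro g' (hg' : T.functorInclusion ≫ g' = f)
      have : F'.map T.functorInclusion ≫ (adj.homEquiv _ _).symm g' =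
          (adj.homEquiv _ _).symm f := by
        apply (adj.homEquiv _ _).injective
        rw [adj.homEquiv_naturality_left, Equiv.apply_symm_apply, Equiv.apply_symm_apply, hg']
      rw [← hu _ this, Equiv.apply_symm_apply]
end

section
/- Let X be a join restriction category and P a join restriction presheaf on X. Then for every object A of X, every x ∈ P(A), and every pairwise-compatible subset T ⊆ X(B, A): x · (⋁_{t∈T} t) = ⋁_{t∈T} (x · t) in P(B). -/
open CategoryTheory Limits Opposite

universe w v u

namespace JRC

open CategoryTheory Limits Opposite

/-- A restriction presheaf on a restriction category (Garner–Lin): a presheaf `P` with,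
for each `x ∈ P(A)`, a restriction idempotent `x̄ : A ⟶ A` satisfying (RP1)–(RP3). -/
structure RestrictionPresheaf (X : Type u) [Category.{v} X] (R : RestrictionStructure X) :
    Type max u v (w + 1) where
  P : Xᵒᵖ ⥤ Type w
  pbar : ∀ {A : X}, P.obj (op A) → (A ⟶ A)
  pbar_idem : ∀ {A : X} (x : P.obj (op A)), R.rbar (pbar x) = pbar x
  rp1 : ∀ {A : X} (x : P.obj (op A)), P.map (pbar x).op x = x
  rp2 : ∀ {A B : X} (x : P.obj (op A)) (f : A ⟶ B),
    pbar (P.map (R.rbar f).op x) = R.rbar f ≫ pbar x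
  rp3 : ∀ {A B : X} (x : P.obj (op A)) (g : B ⟶ A),
    g ≫ pbar x = pbar (P.map g.op x) ≫ g

namespace RestrictionPresheaf

variable {X : Type u} [Category.{v} X] {R : RestrictionStructure X}

/-- The partial order on `P(A)` : `x ≤ y` iff `x = y · x̄`. -/
def ple (P : RestrictionPresheaf.{w} X R) {A : X} (x y : P.P.obj (op A)) : Prop :=
  x = P.P.map (P.pbar x).op y

/-- Compatibility of elements : `x ⌣ y` iff `x · ȳ = y · x̄`. -/
def pcompat (P : RestrictionPresheaf.{w} X R) {A : X} (x y : P.P.obj (op A)) : Prop :=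
  P.P.map (P.pbar y).op x = P.P.map (P.pbar x).op y

/-- Pairwise compatibility of a set of elements of `P(A)`. -/
def psetCompat (P : RestrictionPresheaf.{w} X R) {A : X} (T : Set (P.P.obj (op A))) : Prop :=
  ∀ x ∈ T, ∀ y ∈ T, P.pcompat x y

end RestrictionPresheaf

/-- A join restriction presheaf on a join restriction category: a restriction presheaf in
which every pairwise-compatible subset of each `P(A)` has a join, satisfying (JRP1), (JRP2). -/
structure JoinRestrictionPresheaf (X : Type u) [Category.{v} X]
    (J : JoinRestrictionStructure X) extends
    RestrictionPresheaf.{w} X J.toRestrictionStructure where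
  pjn : ∀ {A : X}, Set (P.obj (op A)) → P.obj (op A)
  pjn_upper : ∀ {A : X} (T : Set (P.obj (op A))), toRestrictionPresheaf.psetCompat T →
    ∀ x ∈ T, toRestrictionPresheaf.ple x (pjn T)
  pjn_least : ∀ {A : X} (T : Set (P.obj (op A))), toRestrictionPresheaf.psetCompat T →
    ∀ y, (∀ x ∈ T, toRestrictionPresheaf.ple x y) → toRestrictionPresheaf.ple (pjn T) y
  jrp1 : ∀ {A : X} (T : Set (P.obj (op A))), toRestrictionPresheaf.psetCompat T →
    pbar (pjn T) = J.jn ((fun x => pbar x) '' T)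
  jrp2 : ∀ {A B : X} (T : Set (P.obj (op A))), toRestrictionPresheaf.psetCompat T →
    ∀ (g : B ⟶ A), P.map g.op (pjn T) = pjn ((fun x => P.map g.op x) '' T)


section AuxLemmas

namespace RestrictionStructure

variable {X : Type u} [Category.{v} X] (R : RestrictionStructure X)

lemma rbar_id (A : X) : R.rbar (𝟙 A) = 𝟙 A := by
  have h := R.r1 (𝟙 A); simpa using h

lemma rbar_rbar {A B : X} (f : A ⟶ B) : R.rbar (R.rbar f) = R.rbar f := by
  have h := R.r3 f (𝟙 A)
  simpa [R.rbar_id] using h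

lemma rbar_idem {A B : X} (f : A ⟶ B) : R.rbar f ≫ R.rbar f = R.rbar f := by
  have h := R.r3 f f
  rw [R.r1] at h
  exact h.symm

/-- `rbar (f ≫ g) ≫ rbar f = rbar (f ≫ g)`. -/
lemma rbar_comp_le {A B C : X} (f : A ⟶ B) (g : B ⟶ C) :
    R.rbar (f ≫ g) ≫ R.rbar f = R.rbar (f ≫ g) := by
  have h1 : R.rbar f ≫ R.rbar (f ≫ g) = R.rbar (f ≫ g) := by
    have h := R.r3 f (f ≫ g)
    rw [← Category.assoc, R.r1] at h
    exact h.symm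
  rw [R.r2 (f ≫ g) f]
  exact h1

/-- `rbar (f ≫ rbar g) = rbar (f ≫ g)`. -/
lemma rbar_comp_rbar {A B C : X} (f : A ⟶ B) (g : B ⟶ C) :
    R.rbar (f ≫ R.rbar g) = R.rbar (f ≫ g) := by
  rw [R.r4 f g, R.r3 (f ≫ g) f, R.rbar_comp_le]

lemma rle_comp_right {A B C : X} {f g : A ⟶ B} (h : R.rle f g) (k : B ⟶ C) :
    R.rle (f ≫ k) (g ≫ k) := by
  unfold rle at h ⊢
  have : R.rbar (f ≫ k) ≫ g ≫ k = f ≫ k := by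
    calc R.rbar (f ≫ k) ≫ g ≫ k
        = (R.rbar (f ≫ k) ≫ R.rbar f) ≫ g ≫ k := by rw [R.rbar_comp_le]
      _ = R.rbar (f ≫ k) ≫ (R.rbar f ≫ g) ≫ k := by simp only [Category.assoc]
      _ = R.rbar (f ≫ k) ≫ f ≫ k := by rw [← h]
      _ = f ≫ k := R.r1 _
  exact this.symm

lemma compat_comp_right {A B C : X} {f g : A ⟶ B} (h : R.compat f g) (k : B ⟶ C) :
    R.compat (f ≫ k) (g ≫ k) := by
  unfold compat at h ⊢
  have key : ∀ (u v : A ⟶ B), R.rbar v ≫ u = R.rbar u ≫ v →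
      R.rbar (v ≫ k) ≫ u ≫ k = R.rbar u ≫ v ≫ k := by
    intro u v huv
    calc R.rbar (v ≫ k) ≫ u ≫ k
        = (R.rbar (v ≫ k) ≫ R.rbar v) ≫ u ≫ k := by rw [R.rbar_comp_le]
      _ = R.rbar (v ≫ k) ≫ (R.rbar v ≫ u) ≫ k := by simp only [Category.assoc]
      _ = R.rbar (v ≫ k) ≫ (R.rbar u ≫ v) ≫ k := by rw [huv]
      _ = (R.rbar (v ≫ k) ≫ R.rbar u) ≫ v ≫ k := by simp only [Category.assoc]
      _ = (R.rbar u ≫ R.rbar (v ≫ k)) ≫ v ≫ k := by rw [R.r2 (v ≫ k) u]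
      _ = R.rbar u ≫ (R.rbar (v ≫ k) ≫ v) ≫ k := by simp only [Category.assoc]
      _ = R.rbar u ≫ (v ≫ R.rbar k) ≫ k := by rw [← R.r4 v k]
      _ = R.rbar u ≫ v ≫ R.rbar k ≫ k := by simp only [Category.assoc]
      _ = R.rbar u ≫ v ≫ k := by rw [R.r1]
  have h1 := key f g h
  have h2 := key g f h.symm
  rw [h1, h2, ← Category.assoc, ← Category.assoc, h]

lemma compat_comp_left {A B C : X} {f g : A ⟶ B} (h : R.compat f g) (e : C ⟶ A) :
    R.compat (e ≫ f) (e ≫ g) := by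
  unfold compat at h ⊢
  calc R.rbar (e ≫ g) ≫ e ≫ f
      = (R.rbar (e ≫ g) ≫ e) ≫ f := by rw [Category.assoc]
    _ = (e ≫ R.rbar g) ≫ f := by rw [← R.r4]
    _ = e ≫ R.rbar g ≫ f := by rw [Category.assoc]
    _ = e ≫ R.rbar f ≫ g := by rw [h]
    _ = (e ≫ R.rbar f) ≫ g := by rw [Category.assoc]
    _ = R.rbar (e ≫ f) ≫ e ≫ g := by rw [R.r4, Category.assoc]

lemma setCompat_comp_right {A B C : X} {T : Set (A ⟶ B)} (hT : R.setCompat T) (k : B ⟶ C) :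
    R.setCompat ((fun t => t ≫ k) '' T) := by
  rintro _ ⟨f, hf, rfl⟩ _ ⟨g, hg, rfl⟩
  exact R.compat_comp_right (hT f hf g hg) k

lemma setCompat_rbar {A B : X} {T : Set (A ⟶ B)} (hT : R.setCompat T) :
    R.setCompat ((fun t => R.rbar t) '' T) := by
  rintro _ ⟨f, hf, rfl⟩ _ ⟨g, hg, rfl⟩
  unfold compat
  rw [R.rbar_rbar, R.rbar_rbar]
  exact R.r2 g f

/-- Three restriction idempotents commute. -/
lemma rbar_swap3 {A B1 B2 B3 : X} (f : A ⟶ B1) (g : A ⟶ B2) (h : A ⟶ B3) :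
    (R.rbar f ≫ R.rbar g) ≫ R.rbar h = (R.rbar h ≫ R.rbar g) ≫ R.rbar f := by
  calc (R.rbar f ≫ R.rbar g) ≫ R.rbar h
      = R.rbar f ≫ R.rbar g ≫ R.rbar h := by rw [Category.assoc]
    _ = R.rbar f ≫ R.rbar h ≫ R.rbar g := by rw [R.r2 g h]
    _ = (R.rbar f ≫ R.rbar h) ≫ R.rbar g := by rw [Category.assoc]
    _ = (R.rbar h ≫ R.rbar f) ≫ R.rbar g := by rw [R.r2 f h]
    _ = R.rbar h ≫ R.rbar f ≫ R.rbar g := by rw [Category.assoc]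
    _ = R.rbar h ≫ R.rbar g ≫ R.rbar f := by rw [R.r2 f g]
    _ = (R.rbar h ≫ R.rbar g) ≫ R.rbar f := by rw [Category.assoc]

end RestrictionStructure

namespace JoinRestrictionStructure

variable {X : Type u} [Category.{v} X] (J : JoinRestrictionStructure X)

/-- Joins are preserved by postcomposition. -/
lemma jn_comp_right {A B C : X} (T : Set (A ⟶ B))
    (hT : J.toRestrictionStructure.setCompat T) (h : B ⟶ C) :
    J.jn T ≫ h = J.jn ((fun t => t ≫ h) '' T) := by
  set R := J.toRestrictionStructure with hR
  have hT2 : R.setCompat ((fun t => t ≫ h) '' T) := R.setCompat_comp_right hT h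
  have claim1 : ∀ t ∈ T, R.rbar (J.jn T ≫ h) ≫ t = t ≫ R.rbar h := by
    intro t ht
    have hle : t = R.rbar t ≫ J.jn T := J.jn_upper T hT t ht
    calc R.rbar (J.jn T ≫ h) ≫ t
        = R.rbar (J.jn T ≫ h) ≫ R.rbar t ≫ J.jn T := by rw [← hle]
      _ = (R.rbar (J.jn T ≫ h) ≫ R.rbar t) ≫ J.jn T := by rw [Category.assoc]
      _ = (R.rbar t ≫ R.rbar (J.jn T ≫ h)) ≫ J.jn T := by rw [R.r2 (J.jn T ≫ h) t]
      _ = R.rbar t ≫ R.rbar (J.jn T ≫ h) ≫ J.jn T := by rw [Category.assoc]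
      _ = R.rbar t ≫ J.jn T ≫ R.rbar h := by rw [← R.r4]
      _ = (R.rbar t ≫ J.jn T) ≫ R.rbar h := by rw [Category.assoc]
      _ = t ≫ R.rbar h := by rw [← hle]
  have step3 : J.jn T ≫ R.rbar h = J.jn ((fun t => t ≫ R.rbar h) '' T) := by
    calc J.jn T ≫ R.rbar h
        = R.rbar (J.jn T ≫ h) ≫ J.jn T := R.r4 (J.jn T) h
      _ = J.jn ((fun t => R.rbar (J.jn T ≫ h) ≫ t) '' T) := J.j2 T hT _
      _ = J.jn ((fun t => t ≫ R.rbar h) '' T) := by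
          rw [Set.image_congr claim1]
  have step4 : R.rbar (J.jn T ≫ h) = R.rbar (J.jn ((fun t => t ≫ h) '' T)) := by
    have hT3 : R.setCompat ((fun t => t ≫ R.rbar h) '' T) := R.setCompat_comp_right hT _
    calc R.rbar (J.jn T ≫ h)
        = R.rbar (J.jn T ≫ R.rbar h) := (R.rbar_comp_rbar (J.jn T) h).symm
      _ = R.rbar (J.jn ((fun t => t ≫ R.rbar h) '' T)) := by rw [step3]
      _ = J.jn ((fun f => R.rbar f) '' ((fun t => t ≫ R.rbar h) '' T)) := J.j1 _ hT3
      _ = J.jn ((fun t => R.rbar (t ≫ R.rbar h)) '' T) := by rw [Set.image_image]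
      _ = J.jn ((fun t => R.rbar (t ≫ h)) '' T) := by
          refine congrArg J.jn (Set.image_congr ?_)
          intro t _
          exact R.rbar_comp_rbar t h
      _ = J.jn ((fun f => R.rbar f) '' ((fun t => t ≫ h) '' T)) := by rw [Set.image_image]
      _ = R.rbar (J.jn ((fun t => t ≫ h) '' T)) := (J.j1 _ hT2).symm
  have step5 : J.jn ((fun t => t ≫ h) '' T)
      = R.rbar (J.jn ((fun t => t ≫ h) '' T)) ≫ J.jn T ≫ h := by
    refine J.jn_least _ hT2 (J.jn T ≫ h) ?_
    rintro _ ⟨t, ht, rfl⟩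
    exact R.rle_comp_right (J.jn_upper T hT t ht) h
  calc J.jn T ≫ h
      = R.rbar (J.jn T ≫ h) ≫ J.jn T ≫ h := (R.r1 _).symm
    _ = R.rbar (J.jn ((fun t => t ≫ h) '' T)) ≫ J.jn T ≫ h := by rw [step4]
    _ = J.jn ((fun t => t ≫ h) '' T) := step5.symm

end JoinRestrictionStructure

end AuxLemmas

end JRC

open JRC CategoryTheory Opposite in
/-- For a join restriction presheaf `P`, `x ∈ P(A)` and a pairwise-compatible subset
`T ⊆ X(B, A)`: `x · (⋁_{t ∈ T} t) = ⋁_{t ∈ T} (x · t)` in `P(B)`. -/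
theorem stmt_13 {X : Type u} [Category.{v} X] (J : JoinRestrictionStructure X)
    (P : JoinRestrictionPresheaf.{w} X J) {A B : X} (x : P.P.obj (op A))
    (T : Set (B ⟶ A)) (hT : J.toRestrictionStructure.setCompat T) :
    P.P.map (J.jn T).op x = P.pjn ((fun t => P.P.map t.op x) '' T) := by
  have mm : ∀ {C D E : X} (f : C ⟶ D) (g : D ⟶ E) (z : P.P.obj (op E)),
      P.P.map (f ≫ g).op z = P.P.map f.op (P.P.map g.op z) := by
    intro C D E f g z
    rw [op_comp, FunctorToTypes.map_comp_apply]
  set R := J.toRestrictionStructure with hR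
  set y : P.P.obj (op B) := P.P.map (J.jn T).op x with hy
  -- each element of the image set is a restriction of `y`
  have helt : ∀ t ∈ T, P.P.map t.op x = P.P.map (R.rbar t).op y := by
    intro t ht
    have hle : t = R.rbar t ≫ J.jn T := J.jn_upper T hT t ht
    rw [hy, ← mm (R.rbar t) (J.jn T) x, ← hle]
  have hbar_elt : ∀ t ∈ T, P.pbar (P.P.map t.op x) = R.rbar t ≫ P.pbar y := by
    intro t ht
    rw [helt t ht]
    exact P.rp2 y t
  -- the image set is pairwise compatible
  have hScompat : P.toRestrictionPresheaf.psetCompat ((fun t => P.P.map t.op x) '' T) := by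
    rintro _ ⟨t₁, h₁, rfl⟩ _ ⟨t₂, h₂, rfl⟩
    show P.P.map (P.pbar (P.P.map t₂.op x)).op (P.P.map t₁.op x)
        = P.P.map (P.pbar (P.P.map t₁.op x)).op (P.P.map t₂.op x)
    rw [hbar_elt t₁ h₁, hbar_elt t₂ h₂, helt t₁ h₁, helt t₂ h₂,
        ← mm (R.rbar t₂ ≫ P.pbar y) (R.rbar t₁) y,
        ← mm (R.rbar t₁ ≫ P.pbar y) (R.rbar t₂) y]
    have hcomm : (R.rbar t₂ ≫ P.pbar y) ≫ R.rbar t₁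
        = (R.rbar t₁ ≫ P.pbar y) ≫ R.rbar t₂ := by
      conv_lhs => rw [← P.pbar_idem y]
      conv_rhs => rw [← P.pbar_idem y]
      exact R.rbar_swap3 t₂ (P.pbar y) t₁
    rw [hcomm]
  -- every element of the image set is below `y`
  have hSle : ∀ s ∈ (fun t => P.P.map t.op x) '' T, P.toRestrictionPresheaf.ple s y := by
    rintro _ ⟨t, ht, rfl⟩
    show P.P.map t.op x = P.P.map (P.pbar (P.P.map t.op x)).op y
    rw [hbar_elt t ht, mm (R.rbar t) (P.pbar y) y, P.rp1 y, ← helt t ht]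
  have hw : P.pjn ((fun t => P.P.map t.op x) '' T)
      = P.P.map (P.pbar (P.pjn ((fun t => P.P.map t.op x) '' T))).op y :=
    P.pjn_least _ hScompat y hSle
  -- the restriction of `y` equals the restriction of the join
  have hyr : y = P.P.map (R.rbar (J.jn T)).op y := by
    rw [hy, ← mm (R.rbar (J.jn T)) (J.jn T) x, R.r1]
  have hybar : P.pbar y = R.rbar (J.jn T) ≫ P.pbar y := by
    conv_lhs => rw [hyr]
    exact P.rp2 y (J.jn T)
  have hbar : P.pbar (P.pjn ((fun t => P.P.map t.op x) '' T)) = P.pbar y := by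
    calc P.pbar (P.pjn ((fun t => P.P.map t.op x) '' T))
        = J.jn ((fun s => P.pbar s) '' ((fun t => P.P.map t.op x) '' T)) :=
          P.jrp1 _ hScompat
      _ = J.jn ((fun t => P.pbar (P.P.map t.op x)) '' T) := by rw [Set.image_image]
      _ = J.jn ((fun t => R.rbar t ≫ P.pbar y) '' T) := by
          rw [Set.image_congr hbar_elt]
      _ = J.jn ((fun e => e ≫ P.pbar y) '' ((fun t => R.rbar t) '' T)) := by
          rw [Set.image_image]
      _ = J.jn ((fun t => R.rbar t) '' T) ≫ P.pbar y :=
          (J.jn_comp_right _ (R.setCompat_rbar hT) _).symm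
      _ = R.rbar (J.jn T) ≫ P.pbar y :=
          congrArg (fun e => e ≫ P.pbar y) (J.j1 T hT).symm
      _ = P.pbar y := hybar.symm
  calc y
      = P.P.map (P.pbar y).op y := (P.rp1 y).symm
    _ = P.P.map (P.pbar (P.pjn ((fun t => P.P.map t.op x) '' T))).op y := by rw [hbar]
    _ = P.pjn ((fun t => P.P.map t.op x) '' T) := hw.symm
end

section
/- Let X be a join restriction category, let P and Q be join restriction presheaves on X, and let S be a pairwise-compatible set of natural transformations P ⟹ Q (in the restriction structure where the restriction of α : P ⟹ Q is given componentwise by ᾱ_A(x) = x · (restriction of α_A(x))). Then the componentwise formula (⋁_{α∈S} α)_A(x) = ⋁_{α∈S} α_A(x) is well defined (the elements α_A(x) for α ∈ S are pairwise compatible in Q(A)), defines a natural transformation P ⟹ Q, and this natural transformation is the join of S; moreover it satisfies (J1) and (J2). -/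
open CategoryTheory Limits Opposite

universe w v u

namespace JRC

open CategoryTheory Limits Opposite

variable {X : Type u} [Category.{v} X] {R : RestrictionStructure X}

/-- The partial order on natural transformations of restriction presheaves:
`α ≤ β` iff `β ∘ ᾱ = α`, where `ᾱ_A(x) = x · (α_A(x))‾` is the restriction of `α`. -/
def NatRLe {P Q : RestrictionPresheaf.{w} X R} (α β : P.P ⟶ Q.P) : Prop :=
  ∀ (A : X) (x : P.P.obj (op A)),
    α.app (op A) x = β.app (op A) (P.P.map (Q.pbar (α.app (op A) x)).op x)

/-- Compatibility of natural transformations of restriction presheaves: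
`α ⌣ β` iff `α_A(x) ⌣ β_A(x)` for all `A` and `x ∈ P(A)`. -/
def NatRCompat {P Q : RestrictionPresheaf.{w} X R} (α β : P.P ⟶ Q.P) : Prop :=
  ∀ (A : X) (x : P.P.obj (op A)), Q.pcompat (α.app (op A) x) (β.app (op A) x)

end JRC

namespace JRCAux

open JRC CategoryTheory Opposite

variable {X : Type u} [Category.{v} X]

lemma idem_comp (R : RestrictionStructure X) {A : X} {e : A ⟶ A} (he : R.rbar e = e) :
    e ≫ e = e := by
  have h := R.r1 e; rwa [he] at h

lemma idem_comm (R : RestrictionStructure X) {A : X} {e f : A ⟶ A}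
    (he : R.rbar e = e) (hf : R.rbar f = f) : e ≫ f = f ≫ e := by
  have h := R.r2 e f; rwa [he, hf] at h

lemma idem_compat (R : RestrictionStructure X) {A : X} {e f : A ⟶ A}
    (he : R.rbar e = e) (hf : R.rbar f = f) : R.compat e f := by
  show R.rbar f ≫ e = R.rbar e ≫ f
  rw [he, hf]
  exact (idem_comm R he hf).symm

lemma jn_idem (J : JoinRestrictionStructure X) {A : X} (U : Set (A ⟶ A))
    (hUc : J.toRestrictionStructure.setCompat U) (hUi : ∀ u ∈ U, J.rbar u = u) :
    J.rbar (J.jn U) = J.jn U := by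
  rw [J.j1 U hUc]
  congr 1
  ext u
  constructor
  · rintro ⟨v, hv, rfl⟩
    show J.rbar v ∈ U
    rw [hUi v hv]; exact hv
  · intro hu
    exact ⟨u, hu, hUi u hu⟩

lemma mapc (F : Xᵒᵖ ⥤ Type w) {A : X} (a b : A ⟶ A) (x : F.obj (op A)) :
    F.map a.op (F.map b.op x) = F.map (a ≫ b).op x := by
  rw [op_comp, FunctorToTypes.map_comp_apply]

/-- Restriction of an element of a join restriction presheaf along an idempotent:
`(x · u)‾ = u ≫ x̄`. -/
lemma pbar_act (J : JoinRestrictionStructure X) (P : JoinRestrictionPresheaf.{w} X J)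
    {A : X} (x : P.P.obj (op A)) {u : A ⟶ A} (hu : J.rbar u = u) :
    P.pbar (P.P.map u.op x) = u ≫ P.pbar x := by
  have h := P.rp2 x u
  rwa [hu] at h

/-- The key computation for (J1): the action of a join of restriction idempotents
on an element is the join of the actions. -/
lemma j1_core (J : JoinRestrictionStructure X) (P : JoinRestrictionPresheaf.{w} X J)
    {A : X} (U : Set (A ⟶ A)) (hUc : J.toRestrictionStructure.setCompat U)
    (hUi : ∀ u ∈ U, J.rbar u = u) (x : P.P.obj (op A)) :
    P.P.map (J.jn U).op x = P.pjn ((fun u => P.P.map u.op x) '' U) := by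
  have hh : J.rbar (J.jn U) = J.jn U := jn_idem J U hUc hUi
  have hhh : J.jn U ≫ J.jn U = J.jn U := idem_comp _ hh
  have hpx : J.rbar (P.pbar x) = P.pbar x := P.pbar_idem x
  -- pairwise compatibility of the actions
  have hVc : P.toRestrictionPresheaf.psetCompat ((fun u => P.P.map u.op x) '' U) := by
    rintro p ⟨u, hu, rfl⟩ q ⟨v, hv, rfl⟩
    show P.P.map (P.pbar (P.P.map v.op x)).op (P.P.map u.op x)
        = P.P.map (P.pbar (P.P.map u.op x)).op (P.P.map v.op x)
    rw [pbar_act J P x (hUi u hu), pbar_act J P x (hUi v hv), mapc, mapc]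
    have key : (v ≫ P.pbar x) ≫ u = (u ≫ P.pbar x) ≫ v := by
      rw [Category.assoc, Category.assoc, idem_comm _ hpx (hUi u hu),
        idem_comm _ hpx (hUi v hv), ← Category.assoc, ← Category.assoc,
        idem_comm _ (hUi u hu) (hUi v hv)]
    rw [key]
  -- each action is below the action of the join
  have hub : ∀ p ∈ (fun u => P.P.map u.op x) '' U,
      P.toRestrictionPresheaf.ple p (P.P.map (J.jn U).op x) := by
    rintro p ⟨u, hu, rfl⟩
    have huh : u ≫ J.jn U = u := by
      have h2 : u = J.rbar u ≫ J.jn U := J.jn_upper U hUc u hu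
      rw [hUi u hu] at h2
      exact h2.symm
    show P.P.map u.op x
        = P.P.map (P.pbar (P.P.map u.op x)).op (P.P.map (J.jn U).op x)
    rw [pbar_act J P x (hUi u hu), mapc]
    have h3 : (u ≫ P.pbar x) ≫ J.jn U = u ≫ P.pbar x := by
      rw [Category.assoc, idem_comm _ hpx hh, ← Category.assoc, huh]
    rw [h3, ← mapc P.P u (P.pbar x) x, P.rp1]
  -- the restriction of the join of actions
  have hpjnV : P.pbar (P.pjn ((fun u => P.P.map u.op x) '' U)) = P.pbar x ≫ J.jn U := by
    rw [P.jrp1 _ hVc]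
    have himg2 : (fun p => P.pbar p) '' ((fun u => P.P.map u.op x) '' U)
        = (fun u => P.pbar x ≫ u) '' U := by
      ext e
      constructor
      · rintro ⟨p, ⟨u, hu, rfl⟩, rfl⟩
        refine ⟨u, hu, ?_⟩
        show P.pbar x ≫ u = P.pbar (P.P.map u.op x)
        rw [pbar_act J P x (hUi u hu)]
        exact idem_comm _ hpx (hUi u hu)
      · rintro ⟨u, hu, rfl⟩
        refine ⟨P.P.map u.op x, ⟨u, hu, rfl⟩, ?_⟩
        show P.pbar (P.P.map u.op x) = P.pbar x ≫ u
        rw [pbar_act J P x (hUi u hu)]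
        exact (idem_comm _ hpx (hUi u hu)).symm
    rw [himg2, ← J.j2 U hUc (P.pbar x)]
  -- conclude
  have hfin : P.pjn ((fun u => P.P.map u.op x) '' U)
      = P.P.map (P.pbar (P.pjn ((fun u => P.P.map u.op x) '' U))).op
          (P.P.map (J.jn U).op x) :=
    P.pjn_least _ hVc _ hub
  rw [hpjnV, mapc, Category.assoc, hhh, idem_comm _ hpx hh,
    ← mapc P.P (J.jn U) (P.pbar x) x, P.rp1] at hfin
  exact hfin.symm

end JRCAux

open JRC CategoryTheory Opposite in
/-- For a pairwise-compatible set `S` of natural transformations `P ⟹ Q` of join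
restriction presheaves, the componentwise formula `(⋁_{α ∈ S} α)_A(x) = ⋁_{α ∈ S} α_A(x)`
is well defined, defines a natural transformation which is the join of `S`, and satisfies
(J1) and (J2). -/
theorem stmt_14 {X : Type u} [Category.{v} X] (J : JoinRestrictionStructure X)
    (P Q : JoinRestrictionPresheaf.{w} X J) (S : Set (P.P ⟶ Q.P))
    (hS : ∀ α ∈ S, ∀ β ∈ S, NatRCompat (P := P.toRestrictionPresheaf)
      (Q := Q.toRestrictionPresheaf) α β) :
    -- the elements `α_A(x)`, `α ∈ S`, are pairwise compatible in `Q(A)`: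
    (∀ (A : X) (x : P.P.obj (op A)),
      Q.toRestrictionPresheaf.psetCompat {y | ∃ α ∈ S, y = α.app (op A) x}) ∧
    -- and the componentwise joins assemble into a natural transformation `γ`
    ∃ γ : P.P ⟶ Q.P,
      (∀ (A : X) (x : P.P.obj (op A)),
        γ.app (op A) x = Q.pjn {y | ∃ α ∈ S, y = α.app (op A) x}) ∧
      -- `γ` is an upper bound of `S`:
      (∀ α ∈ S, NatRLe (P := P.toRestrictionPresheaf) (Q := Q.toRestrictionPresheaf) α γ) ∧
      -- `γ` is the least upper bound of `S`:
      (∀ δ : P.P ⟶ Q.P,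
        (∀ α ∈ S, NatRLe (P := P.toRestrictionPresheaf) (Q := Q.toRestrictionPresheaf) α δ) →
        NatRLe (P := P.toRestrictionPresheaf) (Q := Q.toRestrictionPresheaf) γ δ) ∧
      -- (J1): the restriction of `γ` is the join of the restrictions:
      (∀ (A : X) (x : P.P.obj (op A)),
        P.P.map (Q.pbar (γ.app (op A) x)).op x
          = P.pjn {p | ∃ α ∈ S, p = P.P.map (Q.pbar (α.app (op A) x)).op x}) ∧
      -- (J2): joins are preserved by precomposition:
      (∀ (R : JoinRestrictionPresheaf.{w} X J) (δ : R.P ⟶ P.P) (A : X)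
        (x : R.P.obj (op A)),
        γ.app (op A) (δ.app (op A) x) = Q.pjn {y | ∃ α ∈ S, y = α.app (op A) (δ.app (op A) x)}) := by
  classical
  have hcompat : ∀ (A : X) (x : P.P.obj (op A)),
      Q.toRestrictionPresheaf.psetCompat {y | ∃ α ∈ S, y = α.app (op A) x} := by
    rintro A x y ⟨α, hα, rfl⟩ z ⟨β, hβ, rfl⟩
    exact hS α hα β hβ A x
  have hcompat' : ∀ (A : Xᵒᵖ) (x : P.P.obj A),
      Q.toRestrictionPresheaf.psetCompat (A := A.unop) {y | ∃ α ∈ S, y = α.app A x} :=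
    fun A x => hcompat A.unop x
  refine ⟨hcompat, ?_⟩
  -- construct the natural transformation γ
  let γ : P.P ⟶ Q.P :=
    { app := fun A => TypeCat.ofHom (fun x => Q.pjn {y | ∃ α ∈ S, y = α.app A x})
      naturality := by
        intro A B f
        ext x
        show Q.pjn {y | ∃ α ∈ S, y = α.app B (P.P.map f x)}
            = Q.P.map f (Q.pjn {y | ∃ α ∈ S, y = α.app A x})
        have h := Q.jrp2 (A := A.unop) (B := B.unop) {y | ∃ α ∈ S, y = α.app A x}
          (hcompat' A x) f.unop
        rw [Quiver.Hom.op_unop] at h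
        rw [h]
        congr 1
        ext y
        constructor
        · rintro ⟨α, hα, rfl⟩
          exact ⟨α.app A x, ⟨α, hα, rfl⟩, (NatTrans.naturality_apply α f x).symm⟩
        · rintro ⟨z, ⟨α, hα, rfl⟩, rfl⟩
          exact ⟨α, hα, (NatTrans.naturality_apply α f x).symm⟩ }
  refine ⟨γ, fun A x => rfl, ?_, ?_, ?_, fun R δ A x => rfl⟩
  -- γ is an upper bound of S
  · intro α hα A x
    have h1 : α.app (op A) x
        = Q.P.map (Q.pbar (α.app (op A) x)).op
            (Q.pjn {y | ∃ β ∈ S, y = β.app (op A) x}) :=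
      Q.pjn_upper _ (hcompat A x) _ ⟨α, hα, rfl⟩
    have h2 := NatTrans.naturality_apply γ (Q.pbar (α.app (op A) x)).op x
    show α.app (op A) x = γ.app (op A) (P.P.map (Q.pbar (α.app (op A) x)).op x)
    rw [h2]
    exact h1
  -- γ is the least upper bound of S
  · intro δ hδ A x
    have hT := hcompat A x
    have hc : J.rbar (Q.pbar (Q.pjn {y | ∃ α ∈ S, y = α.app (op A) x}))
        = Q.pbar (Q.pjn {y | ∃ α ∈ S, y = α.app (op A) x}) := Q.pbar_idem _
    have hcc := JRCAux.idem_comp _ hc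
    have key : ∀ y ∈ {y | ∃ α ∈ S, y = α.app (op A) x},
        Q.toRestrictionPresheaf.ple y
          (δ.app (op A)
            (P.P.map (Q.pbar (Q.pjn {y | ∃ α ∈ S, y = α.app (op A) x})).op x)) := by
      rintro y ⟨α, hα, rfl⟩
      have ha : J.rbar (Q.pbar (α.app (op A) x)) = Q.pbar (α.app (op A) x) :=
        Q.pbar_idem _
      have hupper : α.app (op A) x
          = Q.P.map (Q.pbar (α.app (op A) x)).op
              (Q.pjn {y | ∃ β ∈ S, y = β.app (op A) x}) :=
        Q.pjn_upper _ hT _ ⟨α, hα, rfl⟩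
      have hac : Q.pbar (α.app (op A) x)
            ≫ Q.pbar (Q.pjn {y | ∃ β ∈ S, y = β.app (op A) x})
          = Q.pbar (α.app (op A) x) := by
        have h2 := Q.rp2 (Q.pjn {y | ∃ β ∈ S, y = β.app (op A) x})
          (Q.pbar (α.app (op A) x))
        rw [ha, ← hupper] at h2
        exact h2.symm
      show α.app (op A) x
          = Q.P.map (Q.pbar (α.app (op A) x)).op
              (δ.app (op A)
                (P.P.map (Q.pbar (Q.pjn {y | ∃ α ∈ S, y = α.app (op A) x})).op x))
      have hnat := NatTrans.naturality_apply δ (Q.pbar (α.app (op A) x)).op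
        (P.P.map (Q.pbar (Q.pjn {y | ∃ α ∈ S, y = α.app (op A) x})).op x)
      rw [← hnat, JRCAux.mapc, hac]
      exact hδ α hα A x
    have hle : Q.pjn {y | ∃ α ∈ S, y = α.app (op A) x}
        = Q.P.map (Q.pbar (Q.pjn {y | ∃ α ∈ S, y = α.app (op A) x})).op
            (δ.app (op A)
              (P.P.map (Q.pbar (Q.pjn {y | ∃ α ∈ S, y = α.app (op A) x})).op x)) :=
      Q.pjn_least _ hT _ key
    have h4 : Q.P.map (Q.pbar (Q.pjn {y | ∃ α ∈ S, y = α.app (op A) x})).op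
          (δ.app (op A)
            (P.P.map (Q.pbar (Q.pjn {y | ∃ α ∈ S, y = α.app (op A) x})).op x))
        = δ.app (op A)
            (P.P.map (Q.pbar (Q.pjn {y | ∃ α ∈ S, y = α.app (op A) x})).op x) := by
      rw [← NatTrans.naturality_apply δ, JRCAux.mapc, hcc]
    show Q.pjn {y | ∃ α ∈ S, y = α.app (op A) x}
        = δ.app (op A)
            (P.P.map (Q.pbar (Q.pjn {y | ∃ α ∈ S, y = α.app (op A) x})).op x)
    exact hle.trans h4
  -- (J1)
  · intro A x
    have hT := hcompat A x
    have hUidem : ∀ u ∈ (fun y => Q.pbar y) '' {y | ∃ α ∈ S, y = α.app (op A) x},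
        J.rbar u = u := by
      rintro u ⟨y, _, rfl⟩
      exact Q.pbar_idem y
    have hUcomp : J.toRestrictionStructure.setCompat
        ((fun y => Q.pbar y) '' {y | ∃ α ∈ S, y = α.app (op A) x}) :=
      fun u hu v hv => JRCAux.idem_compat _ (hUidem u hu) (hUidem v hv)
    have hch : Q.pbar (γ.app (op A) x)
        = J.jn ((fun y => Q.pbar y) '' {y | ∃ α ∈ S, y = α.app (op A) x}) :=
      Q.jrp1 _ hT
    rw [hch, JRCAux.j1_core J P _ hUcomp hUidem x]
    congr 1
    ext p
    constructor
    · rintro ⟨u, ⟨y, ⟨α, hα, rfl⟩, rfl⟩, rfl⟩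
      exact ⟨α, hα, rfl⟩
    · rintro ⟨α, hα, rfl⟩
      exact ⟨Q.pbar (α.app (op A) x), ⟨α.app (op A) x, ⟨α, hα, rfl⟩, rfl⟩, rfl⟩
end
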